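/- arXiv:1305.5520 — 8 statements merged into one kernel-verified Lean document; each statement's English description precedes it below -/
import Mathlib

section
/- Let G = (V,E) be a finite simple graph on n ≥ 2 vertices that is λ-edge-connected for some integer λ ≥ 1. Let p ∈ [0,1] satisfy p ≥ (20 log₂ n)/λ, and choose a random subset S ⊆ E by including each edge of E in S independently with probability p. Then the spanning subgraph G' = (V,S) is connected with probability at least 1 − 1/n. -/
open Classical

noncomputable section

/-- The edge set of `G` as a `Finset` of `Sym2 V`. -/
def edgeFin {V : Type*} [Fintype V] (G : SimpleGraph V) : Finset (Sym2 V) :=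
  Finset.univ.filter (fun e => e ∈ G.edgeSet)

/-- The set of edges of `G` with exactly one endpoint in `S` (the cut `(S, V ∖ S)`). -/
def cutEdges {V : Type*} [Fintype V] (G : SimpleGraph V) (S : Finset V) : Finset (Sym2 V) :=
  Finset.univ.filter (fun e => e ∈ G.edgeSet ∧ ∃ u v, e = s(u, v) ∧ u ∈ S ∧ v ∉ S)

/-- The probability, under independent `Bernoulli(p)` sampling of each element of the
ground set `E`, that the sampled subset satisfies `Q`. -/
def cubePr {β : Type*} [DecidableEq β] (E : Finset β) (p : ℝ) (Q : Finset β → Prop) : ℝ :=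
  ∑ S ∈ E.powerset, p ^ S.card * (1 - p) ^ (E.card - S.card) * (if Q S then 1 else 0)

/-- `C` is (the vertex set of) a connected component of `H`. -/
def IsCompOf {V : Type*} [Fintype V] (H : SimpleGraph V) (C : Finset V) : Prop :=
  ∃ v : V, C = Finset.univ.filter (fun u => H.Reachable v u)

/-!
Let `excess A` be the number of connected components of `(V, A)` minus one; the sampled graph
is disconnected exactly when its excess is at least `1`. Sampling with probability `p` is the
union of `T` independent rounds of sampling with probability `p'`, where `(1 - p') ^ T = 1 - p`.
In a round, every component of the current graph is left by at least `λ` edges of `G`, so it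
merges with another component with probability at least `1 - (1 - p') ^ λ`; as merging `m`
components lowers the number of components by at least `m / 2`, the expected excess shrinks by
the factor `(1 + (1 - p') ^ λ) / 2`. For `T = 3 ⌈log₂ n⌉` rounds the hypothesis on `p` makes
this factor at most `21 / 40`, so the final expected excess is at most `(n - 1) / n² ≤ 1 / n`.
-/

open Finset

section CubeExpect

variable {β : Type*}

def cubeExpect (E : Finset β) (p : ℝ) (g : Finset β → ℝ) : ℝ :=
  ∑ S ∈ E.powerset, p ^ #S * (1 - p) ^ (#E - #S) * g S

variable {E : Finset β} {p : ℝ}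

theorem cubePr_eq_cubeExpect [DecidableEq β] (Q : Finset β → Prop) :
    cubePr E p Q = cubeExpect E p (fun S => if Q S then 1 else 0) :=
  rfl

theorem cubeExpect_prod_mul_prod_sdiff [DecidableEq β] (a b : β → ℝ) :
    cubeExpect E p (fun S => (∏ i ∈ S, a i) * ∏ i ∈ E \ S, b i)
      = ∏ i ∈ E, (p * a i + (1 - p) * b i) := by
  rw [prod_add, cubeExpect]
  refine sum_congr rfl fun S hS => ?_
  rw [prod_mul_distrib, prod_mul_distrib, prod_const, prod_const,
    card_sdiff_of_subset (mem_powerset.mp hS)]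
  ring

theorem cubeExpect_const (c : ℝ) : cubeExpect E p (fun _ => c) = c := by
  have h := cubeExpect_prod_mul_prod_sdiff (E := E) (p := p) (fun _ => 1) (fun _ => 1)
  simp only [prod_const_one, mul_one, add_sub_cancel, cubeExpect] at h
  rw [cubeExpect, ← sum_mul, h, one_mul]

theorem cubeExpect_congr {g h : Finset β → ℝ} (hgh : ∀ S ⊆ E, g S = h S) :
    cubeExpect E p g = cubeExpect E p h :=
  sum_congr rfl fun S hS => by rw [hgh S (mem_powerset.mp hS)]

theorem cubeExpect_add (g h : Finset β → ℝ) :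
    cubeExpect E p (fun S => g S + h S) = cubeExpect E p g + cubeExpect E p h := by
  simp only [cubeExpect, mul_add, sum_add_distrib]

theorem cubeExpect_sub (g h : Finset β → ℝ) :
    cubeExpect E p (fun S => g S - h S) = cubeExpect E p g - cubeExpect E p h := by
  simp only [cubeExpect, mul_sub, sum_sub_distrib]

theorem cubeExpect_const_mul (c : ℝ) (g : Finset β → ℝ) :
    cubeExpect E p (fun S => c * g S) = c * cubeExpect E p g := by
  simp only [cubeExpect, mul_sum]
  exact sum_congr rfl fun S _ => by ring

theorem cubeExpect_sum {ι : Type*} (I : Finset ι) (f : ι → Finset β → ℝ) :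
    cubeExpect E p (fun S => ∑ i ∈ I, f i S) = ∑ i ∈ I, cubeExpect E p (f i) := by
  simp only [cubeExpect, mul_sum]
  exact sum_comm

theorem cubeExpect_mono (hp0 : 0 ≤ p) (hp1 : p ≤ 1) {g h : Finset β → ℝ}
    (hgh : ∀ S ⊆ E, g S ≤ h S) : cubeExpect E p g ≤ cubeExpect E p h :=
  sum_le_sum fun S hS => mul_le_mul_of_nonneg_left (hgh S (mem_powerset.mp hS))
    (mul_nonneg (pow_nonneg hp0 _) (pow_nonneg (sub_nonneg.mpr hp1) _))

theorem cubeExpect_zero (g : Finset β → ℝ) : cubeExpect E 0 g = g ∅ := by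
  rw [cubeExpect, sum_eq_single_of_mem ∅ (empty_mem_powerset E)]
  · simp
  · intro S _ hS
    rw [zero_pow (card_ne_zero.mpr (nonempty_iff_ne_empty.mpr hS)), zero_mul, zero_mul]

theorem cubeExpect_disjoint [DecidableEq β] {D : Finset β} (hD : D ⊆ E) :
    cubeExpect E p (fun S => if Disjoint S D then 1 else 0) = (1 - p) ^ #D := by
  have h := cubeExpect_prod_mul_prod_sdiff (E := E) (p := p)
    (fun i => if i ∉ D then 1 else 0) (fun _ => 1)
  simp only [prod_boole, prod_const_one, mul_one, ← disjoint_left] at h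
  rw [h]
  calc ∏ i ∈ E, (p * (if i ∉ D then 1 else 0) + (1 - p))
      = ∏ i ∈ E, if i ∈ D then 1 - p else 1 := prod_congr rfl fun i _ => by split_ifs <;> ring
    _ = (1 - p) ^ #D := by rw [prod_ite_mem, inter_eq_right.mpr hD, prod_const]

theorem one_sub_pow_le_cubeExpect_not_disjoint [DecidableEq β] (hp0 : 0 ≤ p) (hp1 : p ≤ 1)
    {D : Finset β} (hD : D ⊆ E) {m : ℕ} (hm : m ≤ #D) :
    1 - (1 - p) ^ m ≤ cubeExpect E p (fun S => if ¬Disjoint S D then 1 else 0) := by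
  have h := cubeExpect_sub (E := E) (p := p) (fun _ => 1) (fun S => if Disjoint S D then 1 else 0)
  rw [cubeExpect_const, cubeExpect_disjoint hD] at h
  rw [cubeExpect_congr (h := fun S => 1 - if Disjoint S D then 1 else 0)
    (fun S _ => by split_ifs <;> simp_all), h]
  linarith [pow_le_pow_of_le_one (sub_nonneg.mpr hp1) (by linarith : 1 - p ≤ 1) hm]

theorem cubeExpect_insert [DecidableEq β] {a : β} (ha : a ∉ E) (g : Finset β → ℝ) :
    cubeExpect (insert a E) p g
      = p * cubeExpect E p (fun S => g (insert a S)) + (1 - p) * cubeExpect E p g := by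
  simp only [cubeExpect]
  rw [powerset_insert, sum_union, sum_image, mul_sum, mul_sum, add_comm]
  · congr 1 <;> refine sum_congr rfl fun S hS => ?_
    · rw [card_insert_of_notMem fun h => ha (mem_powerset.mp hS h), card_insert_of_notMem ha,
        Nat.add_sub_add_right]
      ring
    · rw [card_insert_of_notMem ha, Nat.sub_add_comm (card_le_card (mem_powerset.mp hS))]
      ring
  · intro S hS S' hS' hSS'
    rw [← erase_insert fun h => ha (mem_powerset.mp hS h),
      ← erase_insert fun h => ha (mem_powerset.mp hS' h), hSS']
  · refine disjoint_left.mpr fun S hS hS' => ?_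
    obtain ⟨T, -, rfl⟩ := mem_image.mp hS'
    exact ha (mem_powerset.mp hS (mem_insert_self a T))

theorem cubeExpect_union [DecidableEq β] (p₁ p₂ : ℝ) (g : Finset β → ℝ) :
    cubeExpect E (p₁ + p₂ - p₁ * p₂) g
      = cubeExpect E p₁ (fun S₁ => cubeExpect E p₂ (fun S₂ => g (S₁ ∪ S₂))) := by
  induction E using Finset.induction generalizing g with
  | empty => simp [cubeExpect]
  | insert a E ha ih =>
    simp only [cubeExpect_insert ha, insert_union, union_insert, insert_idem,
      cubeExpect_add, cubeExpect_const_mul, ih]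
    ring

end CubeExpect

theorem two_mul_card_add_card_le_of_surjective {α γ : Type*} [Finite α] {f : α → γ}
    (hf : Function.Surjective f) (T : Finset α) (hT : ∀ a ∈ T, ∃ b ≠ a, f b = f a) :
    2 * Nat.card γ + #T ≤ 2 * Nat.card α := by
  have := Fintype.ofFinite α
  have := Fintype.ofSurjective f hf
  have hfiber : ∀ c, 2 + #{a ∈ T | f a = c} ≤ 2 * #{a | f a = c} := by
    intro c
    rcases eq_empty_or_nonempty {a ∈ T | f a = c} with h | ⟨a, ha⟩
    · obtain ⟨a, rfl⟩ := hf c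
      have : 0 < #{b | f b = f a} := card_pos.mpr ⟨a, by simp⟩
      rw [h, card_empty]
      omega
    · obtain ⟨haT, rfl⟩ := mem_filter.mp ha
      obtain ⟨b, hba, hfb⟩ := hT a haT
      have : 1 < #{x | f x = f a} := one_lt_card.mpr ⟨a, by simp, b, by simp [hfb], hba.symm⟩
      have := card_le_card (filter_subset_filter (fun x => f x = f a) (subset_univ T))
      omega
  have hT' := card_eq_sum_card_fiberwise (f := f) (s := T) (t := univ) fun _ _ => mem_univ _
  have hα := card_eq_sum_card_fiberwise (f := f) (s := univ) (t := univ) fun _ _ => mem_univ _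
  rw [Nat.card_eq_fintype_card, Nat.card_eq_fintype_card, ← card_univ (α := α), hα, hT',
    ← card_univ, mul_sum, mul_comm, ← smul_eq_mul, ← sum_const, ← sum_add_distrib]
  exact sum_le_sum fun c _ => hfiber c

namespace SimpleGraph

variable {V : Type*} [Fintype V]

theorem two_mul_card_connectedComponent_add_card_le {H H' : SimpleGraph V} (h : H ≤ H')
    (T : Finset H.ConnectedComponent)
    (hT : ∀ K ∈ T, ∃ u w, H.connectedComponentMk u = K ∧ H.connectedComponentMk w ≠ K ∧
      H'.Adj u w) :
    2 * Nat.card H'.ConnectedComponent + #T ≤ 2 * Nat.card H.ConnectedComponent := by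
  refine two_mul_card_add_card_le_of_surjective (ConnectedComponent.surjective_map_ofLE h) T
    fun K hK => ?_
  obtain ⟨u, w, rfl, hw, hadj⟩ := hT K hK
  exact ⟨_, hw, (ConnectedComponent.sound hadj.reachable).symm⟩

theorem one_le_card_connectedComponent [Nonempty V] (H : SimpleGraph V) :
    1 ≤ Nat.card H.ConnectedComponent :=
  have : Nonempty H.ConnectedComponent := ⟨H.connectedComponentMk (Classical.arbitrary V)⟩
  Nat.card_pos

theorem two_le_card_connectedComponent_of_not_connected [Nonempty V] {H : SimpleGraph V}
    (h : ¬H.Connected) : 2 ≤ Nat.card H.ConnectedComponent := by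
  obtain ⟨u, w, huw⟩ : ∃ u w, ¬H.Reachable u w := by
    simpa [connected_iff, Preconnected] using h
  exact Finite.one_lt_card_iff_nontrivial.mpr
    ⟨_, _, fun h => huw (ConnectedComponent.exact h)⟩

theorem card_connectedComponent_le_card (H : SimpleGraph V) :
    Nat.card H.ConnectedComponent ≤ Nat.card V :=
  Nat.card_le_card_of_surjective _ fun K => K.exists_rep

theorem ConnectedComponent.supp_ne_univ {H : SimpleGraph V}
    (hH : 1 < Nat.card H.ConnectedComponent) (K : H.ConnectedComponent) : K.supp ≠ Set.univ := by
  have := Finite.one_lt_card_iff_nontrivial.mp hH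
  obtain ⟨K', hK'⟩ := exists_ne K
  obtain ⟨w, rfl⟩ := K'.exists_rep
  intro h
  exact hK' ((ConnectedComponent.mem_supp_iff _ w).mp (h ▸ Set.mem_univ w))

end SimpleGraph

open SimpleGraph

section Sampling

variable {V : Type*} [Fintype V]

abbrev edgeGraph (A : Finset (Sym2 V)) : SimpleGraph V :=
  fromEdgeSet (A : Set (Sym2 V))

def excess (A : Finset (Sym2 V)) : ℝ :=
  Nat.card (edgeGraph A).ConnectedComponent - 1

theorem cutEdges_subset_edgeFin (G : SimpleGraph V) (C : Finset V) :
    cutEdges G C ⊆ edgeFin G :=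
  fun _ he => mem_filter.mpr ⟨mem_univ _, (mem_filter.mp he).2.1⟩

def crosses (G : SimpleGraph V) (C : Set V) (S : Finset (Sym2 V)) : ℝ :=
  if ∃ u ∈ C, ∃ w ∉ C, G.Adj u w ∧ s(u, w) ∈ S then 1 else 0

theorem crosses_nonneg (G : SimpleGraph V) (C : Set V) (S : Finset (Sym2 V)) :
    0 ≤ crosses G C S := by
  rw [crosses]
  split_ifs <;> norm_num

theorem crosses_eq_one_of_not_disjoint {G : SimpleGraph V} {C : Finset V}
    {S : Finset (Sym2 V)} (h : ¬Disjoint S (cutEdges G C)) : crosses G (C : Set V) S = 1 := by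
  obtain ⟨e, heS, he⟩ := not_disjoint_iff.mp h
  obtain ⟨-, heG, u, w, rfl, hu, hw⟩ := mem_filter.mp he
  exact if_pos ⟨u, hu, w, hw, heG, heS⟩

theorem excess_union_le (G : SimpleGraph V) (A S : Finset (Sym2 V)) :
    excess (A ∪ S) ≤
      excess A - (1 / 2) * ∑ K : (edgeGraph A).ConnectedComponent, crosses G K.supp S := by
  set T : Finset (edgeGraph A).ConnectedComponent :=
    {K | ∃ u ∈ K.supp, ∃ w ∉ K.supp, G.Adj u w ∧ s(u, w) ∈ S} with hT
  have hcount := two_mul_card_connectedComponent_add_card_le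
    (fromEdgeSet_mono (by simp) : edgeGraph A ≤ edgeGraph (A ∪ S)) T fun K hK => by
      obtain ⟨u, hu, w, hw, hadj, huwS⟩ := (mem_filter.mp hK).2
      refine ⟨u, w, hu, hw, (fromEdgeSet_adj _).mpr ⟨?_, hadj.ne⟩⟩
      simp [huwS]
  have hsum : ∑ K : (edgeGraph A).ConnectedComponent, crosses G K.supp S = #T := by
    rw [hT, card_filter, Nat.cast_sum]
    refine sum_congr rfl fun K _ => ?_
    rw [crosses]
    split_ifs <;> simp
  have hcountR := (Nat.cast_le (α := ℝ)).mpr hcount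
  simp only [Nat.cast_add, Nat.cast_mul, Nat.cast_ofNat] at hcountR
  rw [excess, excess, hsum]
  linarith

variable {G : SimpleGraph V} {lam : ℕ}

theorem one_sub_pow_le_cubeExpect_crosses
    (hconn : ∀ S : Finset V, S.Nonempty → S ≠ univ → lam ≤ #(cutEdges G S))
    {p : ℝ} (hp0 : 0 ≤ p) (hp1 : p ≤ 1)
    {A : Finset (Sym2 V)} (hA : 1 < Nat.card (edgeGraph A).ConnectedComponent)
    (K : (edgeGraph A).ConnectedComponent) :
    1 - (1 - p) ^ lam ≤ cubeExpect (edgeFin G) p (crosses G K.supp) := by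
  have hne : K.supp.toFinset ≠ univ := by
    rw [Ne, ← coe_inj, Set.coe_toFinset, coe_univ]
    exact K.supp_ne_univ hA
  have hcut := hconn _ (Set.toFinset_nonempty.mpr K.nonempty_supp) hne
  refine (one_sub_pow_le_cubeExpect_not_disjoint hp0 hp1 (cutEdges_subset_edgeFin G _)
    hcut).trans (cubeExpect_mono hp0 hp1 fun S _ => ?_)
  split_ifs with h
  · exact crosses_nonneg G _ S
  · rw [← K.supp.coe_toFinset, crosses_eq_one_of_not_disjoint h]

theorem cubeExpect_excess_union_le [Nonempty V]
    (hconn : ∀ S : Finset V, S.Nonempty → S ≠ univ → lam ≤ #(cutEdges G S))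
    {p : ℝ} (hp0 : 0 ≤ p) (hp1 : p ≤ 1) (A : Finset (Sym2 V)) :
    cubeExpect (edgeFin G) p (fun S => excess (A ∪ S))
      ≤ (1 + (1 - p) ^ lam) / 2 * excess A := by
  have hq1 : (1 - p) ^ lam ≤ 1 := pow_le_one₀ (sub_nonneg.mpr hp1) (by linarith)
  calc cubeExpect (edgeFin G) p (fun S => excess (A ∪ S))
      ≤ cubeExpect (edgeFin G) p (fun S => excess A -
          (1 / 2) * ∑ K : (edgeGraph A).ConnectedComponent, crosses G K.supp S) :=
        cubeExpect_mono hp0 hp1 fun S _ => excess_union_le G A S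
    _ = excess A - (1 / 2) * ∑ K : (edgeGraph A).ConnectedComponent,
          cubeExpect (edgeFin G) p (crosses G K.supp) := by
        rw [cubeExpect_sub, cubeExpect_const, cubeExpect_const_mul, cubeExpect_sum]
    _ ≤ (1 + (1 - p) ^ lam) / 2 * excess A := by
        rcases (one_le_card_connectedComponent (edgeGraph A)).eq_or_lt with hA | hA
        · have hcross : 0 ≤ ∑ K : (edgeGraph A).ConnectedComponent,
              cubeExpect (edgeFin G) p (crosses G K.supp) := sum_nonneg fun K _ => by
            rw [← cubeExpect_const (E := edgeFin G) (p := p) 0]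
            exact cubeExpect_mono hp0 hp1 fun S _ => crosses_nonneg G _ S
          rw [excess, ← hA]
          linarith
        · have hcross : Nat.card (edgeGraph A).ConnectedComponent * (1 - (1 - p) ^ lam)
              ≤ ∑ K : (edgeGraph A).ConnectedComponent,
                cubeExpect (edgeFin G) p (crosses G K.supp) := by
            rw [Nat.card_eq_fintype_card, ← nsmul_eq_mul, ← card_univ, ← sum_const]
            exact sum_le_sum fun K _ => one_sub_pow_le_cubeExpect_crosses hconn hp0 hp1 hA K
          rw [excess]
          nlinarith

theorem cubeExpect_excess_union_le_pow [Nonempty V]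
    (hconn : ∀ S : Finset V, S.Nonempty → S ≠ univ → lam ≤ #(cutEdges G S))
    {p : ℝ} (hp0 : 0 ≤ p) (hp1 : p ≤ 1) (t : ℕ)
    (A : Finset (Sym2 V)) :
    cubeExpect (edgeFin G) (1 - (1 - p) ^ t) (fun S => excess (A ∪ S))
      ≤ ((1 + (1 - p) ^ lam) / 2) ^ t * excess A := by
  induction t generalizing A with
  | zero => simp [cubeExpect_zero]
  | succ t ih =>
    have hθ : 0 ≤ (1 + (1 - p) ^ lam) / 2 := by
      have := pow_nonneg (sub_nonneg.mpr hp1) lam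
      linarith
    have hp : 1 - (1 - p) ^ (t + 1) = p + (1 - (1 - p) ^ t) - p * (1 - (1 - p) ^ t) := by ring
    calc cubeExpect (edgeFin G) (1 - (1 - p) ^ (t + 1)) (fun S => excess (A ∪ S))
        = cubeExpect (edgeFin G) p (fun S₁ => cubeExpect (edgeFin G) (1 - (1 - p) ^ t)
            (fun S₂ => excess (A ∪ S₁ ∪ S₂))) := by
          simp only [hp, cubeExpect_union, union_assoc]
      _ ≤ cubeExpect (edgeFin G) p
            (fun S₁ => ((1 + (1 - p) ^ lam) / 2) ^ t * excess (A ∪ S₁)) :=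
          cubeExpect_mono hp0 hp1 fun S₁ _ => ih (A ∪ S₁)
      _ ≤ ((1 + (1 - p) ^ lam) / 2) ^ (t + 1) * excess A := by
          rw [cubeExpect_const_mul, pow_succ, mul_assoc]
          exact mul_le_mul_of_nonneg_left (cubeExpect_excess_union_le hconn hp0 hp1 A)
            (pow_nonneg hθ t)

theorem one_sub_cubeExpect_excess_le_cubePr_connected [Nonempty V] (E : Finset (Sym2 V))
    {p : ℝ} (hp0 : 0 ≤ p) (hp1 : p ≤ 1) :
    1 - cubeExpect E p excess ≤ cubePr E p (fun S => (edgeGraph S).Connected) := by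
  have hsub := cubeExpect_sub (E := E) (p := p) (fun _ => 1) excess
  rw [cubeExpect_const] at hsub
  rw [cubePr_eq_cubeExpect, ← hsub]
  refine cubeExpect_mono hp0 hp1 fun S _ => ?_
  have h1 : (1 : ℝ) ≤ Nat.card (edgeGraph S).ConnectedComponent := by
    exact_mod_cast one_le_card_connectedComponent _
  split_ifs with h
  · rw [excess]
    linarith
  · have h2 : (2 : ℝ) ≤ Nat.card (edgeGraph S).ConnectedComponent := by
      exact_mod_cast two_le_card_connectedComponent_of_not_connected h
    rw [excess]
    linarith

theorem excess_le (A : Finset (Sym2 V)) : excess A ≤ Fintype.card V - 1 := by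
  have := (edgeGraph A).card_connectedComponent_le_card
  rw [Nat.card_eq_fintype_card (α := V)] at this
  rw [excess]
  gcongr

end Sampling

theorem exp_neg_ten_div_three_le : Real.exp (-(10 / 3)) ≤ 1 / 20 := by
  have h3 : (20 : ℝ) ≤ Real.exp 3 := by
    have h := Real.exp_one_gt_d9
    have h' : (2.7182818283 : ℝ) ^ 3 < Real.exp 1 ^ 3 := by gcongr
    rw [← Real.exp_nat_mul] at h'
    norm_num at h'
    linarith
  calc Real.exp (-(10 / 3)) ≤ Real.exp (-3) := Real.exp_le_exp.mpr (by norm_num)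
    _ = (Real.exp 3)⁻¹ := Real.exp_neg 3
    _ ≤ 1 / 20 := by rw [one_div]; exact inv_anti₀ (by norm_num) h3

theorem pow_le_exp_of_pow_eq {x y : ℝ} (hy0 : 0 ≤ y) {T : ℕ} (hT : T ≠ 0) (hyT : y ^ T = x)
    (m : ℕ) : y ^ m ≤ Real.exp (-((1 - x) * m / T)) := by
  have hy : y = x ^ (T⁻¹ : ℝ) := by
    rw [← hyT, ← Real.rpow_natCast, ← Real.rpow_mul hy0,
      mul_inv_cancel₀ (by exact_mod_cast hT), Real.rpow_one]
  have hx0 : 0 ≤ x := hyT ▸ pow_nonneg hy0 T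
  calc y ^ m = x ^ ((m : ℝ) / T) := by
        rw [hy, ← Real.rpow_natCast, ← Real.rpow_mul hx0, inv_mul_eq_div]
    _ ≤ Real.exp (-(1 - x)) ^ ((m : ℝ) / T) := by
        gcongr
        linarith [Real.add_one_le_exp (-(1 - x))]
    _ = Real.exp (-((1 - x) * m / T)) := by
        rw [← Real.exp_mul]
        ring_nf

theorem pow_three_mul_ceil_logb_le {θ : ℝ} (hθ0 : 0 ≤ θ) (hθ : θ ≤ 21 / 40) {n : ℕ}
    (hn : 1 ≤ n) : θ ^ (3 * ⌈Real.logb 2 n⌉₊) ≤ 1 / (n : ℝ) ^ 2 := by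
  set k := ⌈Real.logb 2 n⌉₊
  have hn0 : (0 : ℝ) < n := by exact_mod_cast hn
  have hnk : (n : ℝ) ≤ 2 ^ k := by
    calc (n : ℝ) = 2 ^ Real.logb 2 n := (Real.rpow_logb (by norm_num) (by norm_num) hn0).symm
      _ ≤ 2 ^ (k : ℝ) := Real.rpow_le_rpow_of_exponent_le (by norm_num) (Nat.le_ceil _)
      _ = 2 ^ k := Real.rpow_natCast 2 k
  calc θ ^ (3 * k) ≤ ((21 / 40) ^ 3) ^ k := by rw [pow_mul]; gcongr
    _ ≤ (1 / 4) ^ k := by gcongr; norm_num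
    _ = 1 / ((2 : ℝ) ^ k) ^ 2 := by rw [← pow_mul, mul_comm, pow_mul, one_div_pow]; norm_num
    _ ≤ 1 / (n : ℝ) ^ 2 := by gcongr

/-- The round parameters: `T = 3 ⌈log₂ n⌉` and `y = (1 - p) ^ (1 / T)`. The bound on `p` gives
`y ^ λ ≤ e ^ (-10 / 3) ≤ 1 / 20`, so the contraction factor is at most `21 / 40`, and
`(21 / 40) ^ 3 ≤ 1 / 4`. -/
theorem exists_rounds {n lam : ℕ} (hn : 2 ≤ n) (hlam : 1 ≤ lam) {p : ℝ} (hp0 : 0 ≤ p)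
    (hp1 : p ≤ 1) (hp : 20 * Real.logb 2 n / lam ≤ p) :
    ∃ (y : ℝ) (T : ℕ), 0 ≤ y ∧ y ≤ 1 ∧ 1 - y ^ T = p ∧
      ((1 + y ^ lam) / 2) ^ T ≤ 1 / (n : ℝ) ^ 2 := by
  set L := Real.logb 2 n
  have hL : 1 ≤ L := by
    rw [← Real.logb_self_eq_one (b := 2) (by norm_num)]
    exact Real.logb_le_logb_of_le one_lt_two (by norm_num) (by exact_mod_cast hn)
  have hk : (⌈L⌉₊ : ℝ) < L + 1 := Nat.ceil_lt_add_one (by linarith)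
  have hT : 3 * ⌈L⌉₊ ≠ 0 := by
    have : 0 < ⌈L⌉₊ := Nat.ceil_pos.mpr (by linarith)
    omega
  set T := 3 * ⌈L⌉₊
  set y := (1 - p) ^ (T⁻¹ : ℝ)
  have hy0 : 0 ≤ y := Real.rpow_nonneg (by linarith) _
  have hy1 : y ≤ 1 := Real.rpow_le_one (by linarith) (by linarith) (by positivity)
  have hyT : y ^ T = 1 - p := by
    rw [← Real.rpow_natCast, ← Real.rpow_mul (by linarith),
      inv_mul_cancel₀ (by exact_mod_cast hT), Real.rpow_one]
  have hq : y ^ lam ≤ 1 / 20 := by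
    have hplam : 20 * L ≤ p * lam := (div_le_iff₀ (by exact_mod_cast hlam)).mp hp
    have hTL : (T : ℝ) ≤ 6 * L := by
      simp only [T, Nat.cast_mul, Nat.cast_ofNat]
      linarith
    calc y ^ lam ≤ Real.exp (-((1 - (1 - p)) * lam / T)) := pow_le_exp_of_pow_eq hy0 hT hyT lam
      _ ≤ Real.exp (-(10 / 3)) := by
          rw [Real.exp_le_exp, neg_le_neg_iff, sub_sub_cancel,
            le_div_iff₀ (by exact_mod_cast Nat.pos_of_ne_zero hT)]
          linarith
      _ ≤ 1 / 20 := exp_neg_ten_div_three_le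
  refine ⟨y, T, hy0, hy1, by rw [hyT, sub_sub_cancel], ?_⟩
  exact pow_three_mul_ceil_logb_le (by positivity) (by linarith) (by omega)

/-- If `G` is a `λ`-edge-connected simple graph on `n ≥ 2` vertices
(`λ ≥ 1`), `p ∈ [0,1]` and `p ≥ 20 log₂ n / λ`, then the spanning subgraph obtained by
keeping each edge independently with probability `p` is connected with probability at
least `1 - 1/n`. -/
theorem statement0 {V : Type*} [Fintype V] (G : SimpleGraph V)
    (n lam : ℕ) (hn : Fintype.card V = n) (hn2 : 2 ≤ n) (hlam : 1 ≤ lam)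
    (hconn : ∀ S : Finset V, S.Nonempty → S ≠ Finset.univ → lam ≤ (cutEdges G S).card)
    (p : ℝ) (hp0 : 0 ≤ p) (hp1 : p ≤ 1)
    (hp : 20 * Real.logb 2 n / lam ≤ p) :
    1 - 1 / (n : ℝ) ≤
      cubePr (edgeFin G) p
        (fun S => (SimpleGraph.fromEdgeSet (↑S : Set (Sym2 V))).Connected) := by
  have : Nonempty V := Fintype.card_pos_iff.mp (by omega)
  have hn2R : (2 : ℝ) ≤ n := by exact_mod_cast hn2
  obtain ⟨y, T, hy0, hy1, hyT, hθT⟩ := exists_rounds hn2 hlam hp0 hp1 hp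
  have hrounds :=
    cubeExpect_excess_union_le_pow hconn (p := 1 - y) (by linarith) (by linarith) T ∅
  simp only [sub_sub_cancel, hyT, empty_union] at hrounds
  have hexcess : cubeExpect (edgeFin G) p excess ≤ 1 / n :=
    calc cubeExpect (edgeFin G) p excess
        ≤ ((1 + y ^ lam) / 2) ^ T * (n - 1) := by
          refine hrounds.trans (mul_le_mul_of_nonneg_left ?_ (by positivity))
          simpa [hn] using excess_le (∅ : Finset (Sym2 V))
      _ ≤ 1 / n ^ 2 * (n - 1) := by gcongr; linarith
      _ ≤ 1 / n := by
          rw [div_mul_eq_mul_div, one_mul, div_le_div_iff₀ (by positivity) (by positivity)]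
          nlinarith
  linarith [one_sub_cubeExpect_excess_le_cubePr_connected (edgeFin G) hp0 hp1]
end
end

section
/- Let G = (V,E) be a finite simple graph that is λ-edge-connected for some integer λ ≥ 1, let T ⊆ E, and let M be the number of connected components of the spanning subgraph (V,T). Choose a random subset F ⊆ E∖T by including each edge of E∖T independently with probability q, where q ∈ [0,1] satisfies (1−q)^λ ≤ 1/e. Then with probability at least 1/2, either M = 1 or the number of connected components of (V, T ∪ F) is at most ((1 + 2/e)/2)·M. -/
open Classical

noncomputable section

/-!
Call a component `c` of `(V, T)` isolated if `F` misses its cut. The cut has at least `λ`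
edges, none of them in `T`, so `c` is isolated with probability at most `(1 - q)^λ ≤ 1/e`,
and by linearity and Markov's inequality fewer than `2M/e` components are isolated with
probability at least `1/2`. A component of `(V, T ∪ F)` is a union of components of `(V, T)`,
and it consists of a single one only if that one is isolated; hence twice the number of
components of `(V, T ∪ F)` is at most `M` plus the number of isolated components.
-/

open Finset SimpleGraph

section BernoulliCube

variable {β : Type*} (E : Finset β) (p : ℝ)

/-- Expectation under the sampling measure of `cubePr`. -/
def cubeExp (X : Finset β → ℝ) : ℝ :=
  ∑ S ∈ E.powerset, p ^ S.card * (1 - p) ^ (E.card - S.card) * X S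

theorem cubePr_eq_cubeExp [DecidableEq β] (Q : Finset β → Prop) :
    cubePr E p Q = cubeExp E p (fun S => if Q S then 1 else 0) := rfl

theorem cubeExp_const (c : ℝ) : cubeExp E p (fun _ => c) = c := by
  rw [cubeExp, ← sum_mul, sum_pow_mul_eq_add_pow, add_sub_cancel, one_pow, one_mul]

theorem cubeExp_congr {X Y : Finset β → ℝ} (h : ∀ S ⊆ E, X S = Y S) :
    cubeExp E p X = cubeExp E p Y :=
  sum_congr rfl fun S hS => by rw [h S (mem_powerset.mp hS)]

theorem cubeExp_add (X Y : Finset β → ℝ) :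
    cubeExp E p (X + Y) = cubeExp E p X + cubeExp E p Y := by
  simp only [cubeExp, Pi.add_apply, mul_add, sum_add_distrib]

theorem cubeExp_const_mul (c : ℝ) (X : Finset β → ℝ) :
    cubeExp E p (fun S => c * X S) = c * cubeExp E p X := by
  simp only [cubeExp, mul_sum]
  exact sum_congr rfl fun S _ => by ring

theorem cubeExp_sum {ι : Type*} (s : Finset ι) (X : ι → Finset β → ℝ) :
    cubeExp E p (fun S => ∑ i ∈ s, X i S) = ∑ i ∈ s, cubeExp E p (X i) := by
  simp only [cubeExp, mul_sum]
  exact sum_comm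

theorem cubeExp_card_filter [DecidableEq β] {ι : Type*} (s : Finset ι) (Q : ι → Finset β → Prop)
    [∀ i S, Decidable (Q i S)] :
    cubeExp E p (fun S => (#{i ∈ s | Q i S} : ℝ)) = ∑ i ∈ s, cubePr E p (Q i) := by
  simp only [card_filter, Nat.cast_sum, Nat.cast_ite, Nat.cast_one, Nat.cast_zero,
    cubeExp_sum, cubePr_eq_cubeExp]
  congr!

theorem cubePr_of_forall [DecidableEq β] {Q : Finset β → Prop} (h : ∀ S ⊆ E, Q S) :
    cubePr E p Q = 1 := by
  rw [cubePr_eq_cubeExp, cubeExp_congr E p (Y := fun _ => 1) fun S hS => if_pos (h S hS),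
    cubeExp_const]

theorem cubePr_add_cubePr_not [DecidableEq β] (Q : Finset β → Prop) :
    cubePr E p Q + cubePr E p (fun S => ¬ Q S) = 1 := by
  rw [cubePr_eq_cubeExp, cubePr_eq_cubeExp, ← cubeExp_add]
  refine (cubeExp_congr E p fun S _ => ?_).trans (cubeExp_const E p 1)
  by_cases h : Q S <;> simp [h]

theorem cubePr_disjoint [DecidableEq β] {D : Finset β} (hD : D ⊆ E) :
    cubePr E p (fun S => Disjoint S D) = (1 - p) ^ D.card := by
  have hfilter : E.powerset.filter (fun S => Disjoint S D) = (E \ D).powerset := by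
    ext S
    simp only [mem_filter, mem_powerset, subset_sdiff]
  have hweight : ∀ S ∈ (E \ D).powerset, p ^ S.card * (1 - p) ^ (E.card - S.card) =
      (1 - p) ^ D.card * (p ^ S.card * (1 - p) ^ ((E \ D).card - S.card)) := by
    intro S hS
    have hSD : S.card ≤ (E \ D).card := card_le_card (mem_powerset.mp hS)
    have hED : (E \ D).card + D.card = E.card := card_sdiff_add_card_eq_card hD
    rw [← mul_assoc, mul_comm _ (p ^ _), mul_assoc, ← pow_add]
    congr 2
    omega
  simp only [cubePr, mul_ite, mul_one, mul_zero]
  rw [← sum_filter, hfilter, sum_congr rfl hweight, ← mul_sum,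
    sum_pow_mul_eq_add_pow, add_sub_cancel, one_pow, mul_one]

variable {E p} (hp0 : 0 ≤ p) (hp1 : p ≤ 1)
include hp0 hp1

theorem cubeExp_mono {X Y : Finset β → ℝ} (h : ∀ S ⊆ E, X S ≤ Y S) :
    cubeExp E p X ≤ cubeExp E p Y :=
  sum_le_sum fun S hS => mul_le_mul_of_nonneg_left (h S (mem_powerset.mp hS))
    (mul_nonneg (pow_nonneg hp0 _) (pow_nonneg (sub_nonneg.mpr hp1) _))

theorem cubePr_mono [DecidableEq β] {Q R : Finset β → Prop} (h : ∀ S ⊆ E, Q S → R S) :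
    cubePr E p Q ≤ cubePr E p R :=
  cubeExp_mono hp0 hp1 fun S hS => by
    by_cases hQ : Q S
    · simp [hQ, h S hS hQ]
    · by_cases hR : R S <;> simp [hQ, hR]

theorem cubePr_le_cubeExp_div [DecidableEq β] {X : Finset β → ℝ} (hX : ∀ S ⊆ E, 0 ≤ X S)
    {a : ℝ} (ha : 0 < a) :
    cubePr E p (fun S => a ≤ X S) ≤ cubeExp E p X / a := by
  rw [le_div_iff₀ ha, cubePr_eq_cubeExp, mul_comm, ← cubeExp_const_mul]
  refine cubeExp_mono hp0 hp1 fun S hS => ?_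
  by_cases h : a ≤ X S
  · simp [h]
  · simpa [h] using hX S hS

theorem one_half_le_cubePr_lt_two_mul [DecidableEq β] {X : Finset β → ℝ}
    (hX : ∀ S ⊆ E, 0 ≤ X S) {μ : ℝ} (hμ : 0 < μ) (hXμ : cubeExp E p X ≤ μ) :
    1 / 2 ≤ cubePr E p (fun S => X S < 2 * μ) := by
  have hsum := cubePr_add_cubePr_not E p (fun S => 2 * μ ≤ X S)
  simp only [not_le] at hsum
  have hmarkov := cubePr_le_cubeExp_div hp0 hp1 hX (by positivity : 0 < 2 * μ)
  have hhalf : cubeExp E p X / (2 * μ) ≤ 1 / 2 := by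
    rw [div_le_iff₀ (by positivity)]
    linarith
  linarith

end BernoulliCube

theorem Fintype.two_mul_card_le_card_add_card_filter {A B : Type*} [Fintype A] [Fintype B]
    [DecidableEq B] {f : A → B} (hf : Function.Surjective f) (P : A → Prop) [DecidablePred P]
    (h : ∀ a, ¬ P a → ∃ a', a' ≠ a ∧ f a' = f a) :
    2 * Fintype.card B ≤ Fintype.card A + #{a | P a} := by
  have hfiber : ∀ b, 2 ≤ #{a | f a = b} + #{a ∈ {a | P a} | f a = b} := by
    intro b
    obtain ⟨a, rfl⟩ := hf b
    by_cases ha : P a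
    · have h₁ : 0 < #{x | f x = f a} := Finset.card_pos.mpr ⟨a, by simp⟩
      have h₂ : 0 < #{x ∈ {x | P x} | f x = f a} := Finset.card_pos.mpr ⟨a, by simp [ha]⟩
      omega
    · obtain ⟨a', hne, hfa'⟩ := h a ha
      have : 1 < #{x | f x = f a} := Finset.one_lt_card.mpr ⟨a', by simp [hfa'], a, by simp, hne⟩
      omega
  calc 2 * Fintype.card B = ∑ _b : B, 2 := by simp [mul_comm]
    _ ≤ ∑ b, (#{a | f a = b} + #{a ∈ {a | P a} | f a = b}) := sum_le_sum fun b _ => hfiber b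
    _ = Fintype.card A + #{a | P a} := by
      rw [sum_add_distrib, ← card_eq_sum_card_fiberwise (by simp [Set.MapsTo]),
        ← card_eq_sum_card_fiberwise (by simp [Set.MapsTo]), card_univ]

namespace SimpleGraph

variable {V : Type*} [Fintype V]

theorem two_mul_card_connectedComponent_le {H H' : SimpleGraph V} (hle : H ≤ H')
    [Fintype H.ConnectedComponent] (P : H.ConnectedComponent → Prop) [DecidablePred P]
    (hP : ∀ c, ¬ P c → ∃ u v, H'.Adj u v ∧ H.connectedComponentMk u = c ∧
      H.connectedComponentMk v ≠ c) :
    2 * Nat.card H'.ConnectedComponent ≤ Nat.card H.ConnectedComponent + #{c | P c} := by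
  rw [Nat.card_eq_fintype_card, Nat.card_eq_fintype_card]
  refine Fintype.two_mul_card_le_card_add_card_filter
    (ConnectedComponent.surjective_map_ofLE hle) P fun c hc => ?_
  obtain ⟨u, v, huv, rfl, hv⟩ := hP c hc
  exact ⟨H.connectedComponentMk v, hv, by simpa using huv.reachable.symm⟩

theorem ConnectedComponent.supp_toFinset_ne_univ {H : SimpleGraph V}
    (h : 1 < Nat.card H.ConnectedComponent) (c : H.ConnectedComponent) [Fintype c.supp] :
    c.supp.toFinset ≠ univ := by
  have := Finite.one_lt_card_iff_nontrivial.mp h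
  obtain ⟨c', hc'⟩ := exists_ne c
  obtain ⟨v, hv⟩ := c'.nonempty_supp
  intro hc
  have hvc : v ∈ c.supp := Set.mem_toFinset.mp (hc ▸ mem_univ v)
  exact hc' (((c'.mem_supp_iff v).mp hv).symm.trans ((c.mem_supp_iff v).mp hvc))

theorem mem_cutEdges_supp {G H : SimpleGraph V} {c : H.ConnectedComponent} [Fintype c.supp]
    {e : Sym2 V} :
    e ∈ cutEdges G c.supp.toFinset ↔ e ∈ G.edgeSet ∧
      ∃ u v, e = s(u, v) ∧ H.connectedComponentMk u = c ∧ H.connectedComponentMk v ≠ c := by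
  simp [cutEdges]

end SimpleGraph

section ComponentCuts

variable {V : Type*} [Fintype V] (G : SimpleGraph V) (T : Finset (Sym2 V))

theorem cutEdges_supp_subset_sdiff (c : (fromEdgeSet (T : Set (Sym2 V))).ConnectedComponent) :
    cutEdges G c.supp.toFinset ⊆ edgeFin G \ T := by
  intro e he
  obtain ⟨heG, u, v, rfl, hu, hv⟩ := mem_cutEdges_supp.mp he
  refine mem_sdiff.mpr ⟨by simpa [edgeFin] using heG, fun heT => hv ?_⟩
  rw [← hu]
  exact (ConnectedComponent.sound ((fromEdgeSet_adj _).mpr ⟨heT, G.ne_of_adj heG⟩).reachable).symm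

theorem two_mul_card_connectedComponent_fromEdgeSet_union_le (F : Finset (Sym2 V)) :
    2 * Nat.card (fromEdgeSet (↑(T ∪ F) : Set (Sym2 V))).ConnectedComponent ≤
      Nat.card (fromEdgeSet (T : Set (Sym2 V))).ConnectedComponent +
        #{c : (fromEdgeSet (T : Set (Sym2 V))).ConnectedComponent |
          Disjoint F (cutEdges G c.supp.toFinset)} := by
  refine two_mul_card_connectedComponent_le (fromEdgeSet_mono (by simp)) _ fun c hc => ?_
  obtain ⟨e, heF, he⟩ := not_disjoint_iff.mp hc
  obtain ⟨heG, u, v, rfl, hu, hv⟩ := mem_cutEdges_supp.mp he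
  exact ⟨u, v, (fromEdgeSet_adj _).mpr ⟨by simp [heF], G.ne_of_adj heG⟩, hu, hv⟩

theorem cubeExp_card_disjoint_cutEdges_le {lam : ℕ}
    (hconn : ∀ S : Finset V, S.Nonempty → S ≠ univ → lam ≤ (cutEdges G S).card)
    (hT : 1 < Nat.card (fromEdgeSet (T : Set (Sym2 V))).ConnectedComponent)
    {q : ℝ} (hq0 : 0 ≤ q) (hq1 : q ≤ 1) :
    cubeExp (edgeFin G \ T) q
        (fun F => #{c : (fromEdgeSet (T : Set (Sym2 V))).ConnectedComponent |
          Disjoint F (cutEdges G c.supp.toFinset)}) ≤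
      Nat.card (fromEdgeSet (T : Set (Sym2 V))).ConnectedComponent * (1 - q) ^ lam := by
  rw [cubeExp_card_filter, Nat.card_eq_fintype_card, ← card_univ, ← nsmul_eq_mul, ← sum_const]
  refine sum_le_sum fun c _ => ?_
  rw [cubePr_disjoint _ _ (cutEdges_supp_subset_sdiff G T c)]
  exact pow_le_pow_of_le_one (by linarith) (by linarith)
    (hconn _ (by simpa using c.nonempty_supp) (c.supp_toFinset_ne_univ hT))

end ComponentCuts

theorem statement3_general {V : Type*} [Fintype V] (G : SimpleGraph V)
    (lam : ℕ)
    (hconn : ∀ S : Finset V, S.Nonempty → S ≠ Finset.univ → lam ≤ (cutEdges G S).card)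
    (T : Finset (Sym2 V))
    (M : ℕ)
    (hM : M = Nat.card (SimpleGraph.fromEdgeSet (↑T : Set (Sym2 V))).ConnectedComponent)
    (q : ℝ) (hq0 : 0 ≤ q) (hq1 : q ≤ 1)
    (hq : (1 - q) ^ lam ≤ 1 / Real.exp 1) :
    (1 : ℝ) / 2 ≤
      cubePr (edgeFin G \ T) q (fun F =>
        M = 1 ∨
          (Nat.card (SimpleGraph.fromEdgeSet (↑(T ∪ F) : Set (Sym2 V))).ConnectedComponent : ℝ) ≤
            ((1 + 2 / Real.exp 1) / 2) * M) := by
  set X : Finset (Sym2 V) → ℝ := fun F =>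
    #{c : (fromEdgeSet (T : Set (Sym2 V))).ConnectedComponent |
      Disjoint F (cutEdges G c.supp.toFinset)}
  have hmerge (F : Finset (Sym2 V)) :
      2 * (Nat.card (fromEdgeSet (↑(T ∪ F) : Set (Sym2 V))).ConnectedComponent : ℝ) ≤ M + X F := by
    rw [hM]
    simp only [X]
    exact_mod_cast (two_mul_card_connectedComponent_fromEdgeSet_union_le G T F :)
  have hXM (F : Finset (Sym2 V)) : X F ≤ M := by
    rw [hM, Nat.card_eq_fintype_card]
    simp only [X]
    exact_mod_cast card_filter_le univ _
  rcases le_or_gt M 1 with hM1 | hM1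
  · rw [cubePr_of_forall _ _ fun F _ => ?_]
    · norm_num
    obtain rfl | rfl : M = 0 ∨ M = 1 := by omega
    · have h₁ := hmerge F
      have h₂ := hXM F
      simp only [Nat.cast_zero, zero_add, mul_zero] at h₁ h₂ ⊢
      exact Or.inr (by linarith)
    · exact Or.inl rfl
  have hMpos : (0 : ℝ) < M := by exact_mod_cast (by omega : 0 < M)
  have hexp : cubeExp (edgeFin G \ T) q X ≤ M / Real.exp 1 := by
    calc cubeExp (edgeFin G \ T) q X ≤ M * (1 - q) ^ lam :=
          hM ▸ cubeExp_card_disjoint_cutEdges_le G T hconn (hM ▸ hM1) hq0 hq1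
      _ ≤ M / Real.exp 1 := by rw [div_eq_mul_one_div]; gcongr
  refine (one_half_le_cubePr_lt_two_mul hq0 hq1 (fun F _ => by positivity) (by positivity)
    hexp).trans (cubePr_mono hq0 hq1 fun F _ hF => Or.inr ?_)
  linarith [hmerge F, show (1 + 2 / Real.exp 1) / 2 * M = (M + 2 * (M / Real.exp 1)) / 2 by ring]

/-- One layer step: if `G` is `λ`-edge-connected, `T ⊆ E`, `M` is the
number of connected components of `(V, T)`, and each edge of `E ∖ T` is kept
independently with probability `q` where `(1-q)^λ ≤ 1/e`, then with probability at
least `1/2` either `M = 1` or the number of components of `(V, T ∪ F)` is at most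
`((1 + 2/e)/2)·M`. -/
theorem statement3 {V : Type*} [Fintype V] (G : SimpleGraph V)
    (lam : ℕ) (hlam : 1 ≤ lam)
    (hconn : ∀ S : Finset V, S.Nonempty → S ≠ Finset.univ → lam ≤ (cutEdges G S).card)
    (T : Finset (Sym2 V)) (hT : T ⊆ edgeFin G)
    (M : ℕ)
    (hM : M = Nat.card (SimpleGraph.fromEdgeSet (↑T : Set (Sym2 V))).ConnectedComponent)
    (q : ℝ) (hq0 : 0 ≤ q) (hq1 : q ≤ 1)
    (hq : (1 - q) ^ lam ≤ 1 / Real.exp 1) :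
    (1 : ℝ) / 2 ≤
      cubePr (edgeFin G \ T) q (fun F =>
        M = 1 ∨
          (Nat.card (SimpleGraph.fromEdgeSet (↑(T ∪ F) : Set (Sym2 V))).ConnectedComponent : ℝ) ≤
            ((1 + 2 / Real.exp 1) / 2) * M) :=
  statement3_general G lam hconn T M hM q hq0 hq1 hq
end
end

section
/- Let V be a finite set, let T and F be sets of edges (unordered pairs of distinct elements) on V, and let c be the number of connected components of the graph (V,T). Call a component C of (V,T) bad if no edge of F has exactly one endpoint in C, and let z be the number of bad components. Then the number of connected components of the graph (V, T ∪ F) satisfies #components(V, T∪F) ≤ z + (c − z)/2. -/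
open Classical

noncomputable section

lemma count_aux {α β : Type*} [Fintype α] [Fintype β] [DecidableEq α] [DecidableEq β]
    (f : α → β) (hf : Function.Surjective f) (B : Finset α)
    (h1 : ∀ a ∈ B, ∀ a', f a' = f a → a' = a)
    (h2 : ∀ a ∉ B, ∃ a', a' ≠ a ∧ f a' = f a) :
    2 * Fintype.card β ≤ Fintype.card α + B.card := by
  classical
  set S : Finset β := B.image f with hS
  have hcard : Fintype.card α =
      ∑ b ∈ Finset.univ, (Finset.univ.filter (fun a => f a = b)).card := by
    rw [← Finset.card_univ]
    exact Finset.card_eq_sum_card_fiberwise (fun x _ => Finset.mem_univ (f x))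
  have hSB : S.card = B.card := by
    apply Finset.card_image_of_injOn
    intro a ha a' ha' hfa
    exact h1 a' ha' a hfa
  have hfib1 : ∀ b ∈ S, 1 ≤ (Finset.univ.filter (fun a => f a = b)).card := by
    intro b hb
    obtain ⟨a, _, rfl⟩ := Finset.mem_image.mp hb
    exact Finset.card_pos.mpr ⟨a, by simp⟩
  have hfib2 : ∀ b ∈ Finset.univ \ S, 2 ≤ (Finset.univ.filter (fun a => f a = b)).card := by
    intro b hb
    have hbS : b ∉ S := (Finset.mem_sdiff.mp hb).2
    obtain ⟨a, rfl⟩ := hf b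
    have haB : a ∉ B := fun haB => hbS (Finset.mem_image.mpr ⟨a, haB, rfl⟩)
    obtain ⟨a', ha', hfa'⟩ := h2 a haB
    have : ({a, a'} : Finset α) ⊆ Finset.univ.filter (fun x => f x = f a) := by
      intro x hx
      rcases Finset.mem_insert.mp hx with rfl | hx
      · simp
      · simp [Finset.mem_singleton.mp hx, hfa']
    calc 2 = ({a, a'} : Finset α).card := by
            rw [Finset.card_insert_of_notMem (by simp [Ne.symm ha']), Finset.card_singleton]
      _ ≤ _ := Finset.card_le_card this
  have hsplit : ∑ b ∈ Finset.univ \ S, (Finset.univ.filter (fun a => f a = b)).card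
      + ∑ b ∈ S, (Finset.univ.filter (fun a => f a = b)).card
      = ∑ b ∈ Finset.univ, (Finset.univ.filter (fun a => f a = b)).card :=
    Finset.sum_sdiff (Finset.subset_univ S)
  have h1' : S.card ≤ ∑ b ∈ S, (Finset.univ.filter (fun a => f a = b)).card := by
    calc S.card = ∑ _b ∈ S, 1 := by simp
      _ ≤ _ := Finset.sum_le_sum hfib1
  have h2' : 2 * (Finset.univ \ S).card
      ≤ ∑ b ∈ Finset.univ \ S, (Finset.univ.filter (fun a => f a = b)).card := by
    calc 2 * (Finset.univ \ S).card = ∑ _b ∈ Finset.univ \ S, 2 := by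
          rw [Finset.sum_const, smul_eq_mul, mul_comm]
      _ ≤ _ := Finset.sum_le_sum hfib2
  have hcardβ : Fintype.card β = (Finset.univ \ S).card + S.card := by
    have hle' : S.card ≤ Fintype.card β := by
      simpa using Finset.card_le_univ S
    rw [Finset.card_sdiff_of_subset (Finset.subset_univ S), Finset.card_univ]
    omega
  rw [hcard, ← hsplit]
  omega

/-- If `(V, T)` has `c` connected components and `z` of them are bad
(no edge of `F` crosses them), then `(V, T ∪ F)` has at most `z + (c - z)/2`
connected components. -/
theorem statement4 {V : Type*} [Fintype V] (T F : Finset (Sym2 V))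
    (hT : ∀ e ∈ T, ¬ e.IsDiag) (hF : ∀ e ∈ F, ¬ e.IsDiag)
    (c z : ℕ)
    (hc : c = Nat.card (SimpleGraph.fromEdgeSet (↑T : Set (Sym2 V))).ConnectedComponent)
    (hz : z = Nat.card {comp : (SimpleGraph.fromEdgeSet (↑T : Set (Sym2 V))).ConnectedComponent //
        ∀ e ∈ F, ¬ ∃ u v, e = s(u, v) ∧ u ∈ comp.supp ∧ v ∉ comp.supp}) :
    (Nat.card (SimpleGraph.fromEdgeSet (↑(T ∪ F) : Set (Sym2 V))).ConnectedComponent : ℝ) ≤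
      z + (c - z) / 2 := by
  classical
  set G := SimpleGraph.fromEdgeSet (↑T : Set (Sym2 V)) with hG
  set G' := SimpleGraph.fromEdgeSet (↑(T ∪ F) : Set (Sym2 V)) with hG'
  have hle : G ≤ G' := SimpleGraph.fromEdgeSet_mono (by
    rw [Finset.coe_union]; exact Set.subset_union_left)
  set φ : G →g G' := SimpleGraph.Hom.ofLE hle with hφ
  set f : G.ConnectedComponent → G'.ConnectedComponent :=
    SimpleGraph.ConnectedComponent.map φ with hf
  have hfmk : ∀ v : V, f (G.connectedComponentMk v) = G'.connectedComponentMk v := by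
    intro v
    exact SimpleGraph.ConnectedComponent.map_mk φ v
  have hfsurj : Function.Surjective f := by
    intro D
    induction D using SimpleGraph.ConnectedComponent.ind with
    | _ v => exact ⟨G.connectedComponentMk v, hfmk v⟩
  set Bad : G.ConnectedComponent → Prop :=
    fun comp => ∀ e ∈ F, ¬ ∃ u v, e = s(u, v) ∧ u ∈ comp.supp ∧ v ∉ comp.supp with hBad
  -- closure of bad components under G' adjacency
  have hstep : ∀ C : G.ConnectedComponent, Bad C → ∀ x y : V, G'.Adj x y →
      x ∈ C.supp → y ∈ C.supp := by
    intro C hC x y hxy hx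
    rw [hG', SimpleGraph.fromEdgeSet_adj] at hxy
    obtain ⟨hmem, hne⟩ := hxy
    rw [Finset.coe_union, Set.mem_union] at hmem
    rcases hmem with hmem | hmem
    · have hadj : G.Adj x y := by
        rw [hG, SimpleGraph.fromEdgeSet_adj]; exact ⟨hmem, hne⟩
      rw [SimpleGraph.ConnectedComponent.mem_supp_iff] at hx ⊢
      rw [← hx]
      exact (SimpleGraph.ConnectedComponent.sound hadj.symm.reachable)
    · by_contra hy
      exact hC s(x, y) hmem ⟨x, y, rfl, hx, hy⟩
  have hreach : ∀ C : G.ConnectedComponent, Bad C → ∀ a b : V, G'.Walk a b →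
      a ∈ C.supp → b ∈ C.supp := by
    intro C hC a b w
    induction w with
    | nil => exact id
    | cons h _ ih => exact fun ha => ih (hstep C hC _ _ h ha)
  -- bad components have singleton fibers
  have hbadinj : ∀ C : G.ConnectedComponent, Bad C → ∀ C', f C' = f C → C' = C := by
    intro C hC C' hfC
    induction C' using SimpleGraph.ConnectedComponent.ind with
    | _ u =>
      obtain ⟨v, hv0⟩ := C.exists_rep
      have hv : G.connectedComponentMk v = C := hv0
      have hvC : v ∈ C.supp := by
        rw [SimpleGraph.ConnectedComponent.mem_supp_iff, hv]
      have : G'.connectedComponentMk u = G'.connectedComponentMk v := by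
        rw [← hfmk, ← hfmk, hfC, hv]
      have hruv : G'.Reachable v u :=
        (SimpleGraph.ConnectedComponent.exact this).symm
      obtain ⟨w⟩ := hruv
      have := hreach C hC v u w hvC
      rwa [SimpleGraph.ConnectedComponent.mem_supp_iff] at this
  -- non-bad components merge with another component
  have hnotbad : ∀ C : G.ConnectedComponent, ¬ Bad C →
      ∃ C', C' ≠ C ∧ f C' = f C := by
    intro C hC
    rw [hBad] at hC
    simp only [not_forall, Classical.not_imp, not_not] at hC
    obtain ⟨e, heF, u, v, rfl, hu, hv⟩ := hC
    refine ⟨G.connectedComponentMk v, ?_, ?_⟩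
    · intro h
      rw [← SimpleGraph.ConnectedComponent.mem_supp_iff] at h
      exact hv h
    · have hne : u ≠ v := by
        intro h; subst h; exact hv hu
      have hadj : G'.Adj u v := by
        rw [hG', SimpleGraph.fromEdgeSet_adj]
        refine ⟨?_, hne⟩
        rw [Finset.coe_union, Set.mem_union]
        exact Or.inr heF
      rw [SimpleGraph.ConnectedComponent.mem_supp_iff] at hu
      rw [← hu, hfmk, hfmk]
      exact (SimpleGraph.ConnectedComponent.sound hadj.symm.reachable)
  -- counting
  have : Fintype G.ConnectedComponent := Fintype.ofFinite _
  have : Fintype G'.ConnectedComponent := Fintype.ofFinite _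
  set B : Finset G.ConnectedComponent := Finset.univ.filter Bad with hB
  have hmain : 2 * Fintype.card G'.ConnectedComponent
      ≤ Fintype.card G.ConnectedComponent + B.card := by
    apply count_aux f hfsurj B
    · intro a ha a' hfa
      exact hbadinj a ((Finset.mem_filter.mp ha).2) a' hfa
    · intro a ha
      exact hnotbad a (fun h => ha (Finset.mem_filter.mpr ⟨Finset.mem_univ a, h⟩))
  have hzB : z = B.card := by
    rw [hz, Nat.card_eq_fintype_card, Fintype.card_subtype]
  have hcG : c = Fintype.card G.ConnectedComponent := by
    rw [hc, Nat.card_eq_fintype_card]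
  have hm : Nat.card G'.ConnectedComponent = Fintype.card G'.ConnectedComponent :=
    Nat.card_eq_fintype_card
  rw [hm, hzB, hcG]
  have h2 : (2 : ℝ) * (Fintype.card G'.ConnectedComponent : ℝ)
      ≤ (Fintype.card G.ConnectedComponent : ℝ) + (B.card : ℝ) := by
    exact_mod_cast hmain
  linarith
end
end

section
/- For every finite simple graph G = (V,E) and every integer k ≥ 1, there exists a set E* ⊆ E with |E*| ≤ k·|V| such that for every nonempty proper vertex set S ⊆ V with |∂S| ≤ k, every edge of ∂S belongs to E*. -/
/-!
Greedily peel off spanning forests `F₀, F₁, …, F_{k-1}`, each `Fᵢ` a spanning forest of what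
is left of `G` after removing `F₀, …, F_{i-1}`, and take `E*` to be their union. A forest has
fewer edges than vertices, so `|E*| ≤ k|V|`. If an edge `uv` of a cut `∂S` avoided `E*`, it
would survive every round, so `u` and `v` would be connected in every `Fᵢ`; each `Fᵢ` would
then contribute its own edge to `∂S`, and with `uv` itself `∂S` would have more than `k` edges.
-/

open Classical

noncomputable section

theorem Finset.card_lt_card_of_pairwiseDisjoint_inter_nonempty {ι α : Type*} [DecidableEq α]
    {s : Finset ι} {A : ι → Finset α} {T : Finset α} {a : α}
    (hA : (s : Set ι).PairwiseDisjoint A) (hmeet : ∀ i ∈ s, (T ∩ A i).Nonempty)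
    (ha : a ∈ T) (haA : ∀ i ∈ s, a ∉ A i) : s.card < T.card := by
  have hdisj : (s : Set ι).PairwiseDisjoint fun i => T ∩ A i :=
    hA.mono fun i => Finset.inter_subset_right
  have hsub : s.biUnion (fun i => T ∩ A i) ⊆ T.erase a := by
    intro b hb
    obtain ⟨i, hi, hbT, hbA⟩ := by simpa only [Finset.mem_biUnion, Finset.mem_inter] using hb
    exact Finset.mem_erase.mpr ⟨fun hba => haA i hi (hba ▸ hbA), hbT⟩
  calc s.card = ∑ _i ∈ s, 1 := by simp
    _ ≤ ∑ i ∈ s, (T ∩ A i).card :=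
        Finset.sum_le_sum fun i hi => Finset.one_le_card.mpr (hmeet i hi)
    _ = (s.biUnion fun i => T ∩ A i).card := (Finset.card_biUnion hdisj).symm
    _ ≤ (T.erase a).card := Finset.card_le_card hsub
    _ < T.card := Finset.card_erase_lt_of_mem ha

namespace SimpleGraph

variable {V : Type*}

section SpanningForest

def spanningForest (H : SimpleGraph V) : SimpleGraph V :=
  H.exists_isAcyclic_reachable_eq_le.choose

variable (H : SimpleGraph V)

theorem spanningForest_le : H.spanningForest ≤ H :=
  H.exists_isAcyclic_reachable_eq_le.choose_spec.1

theorem isAcyclic_spanningForest : H.spanningForest.IsAcyclic :=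
  H.exists_isAcyclic_reachable_eq_le.choose_spec.2.1

theorem reachable_spanningForest : H.spanningForest.Reachable = H.Reachable :=
  H.exists_isAcyclic_reachable_eq_le.choose_spec.2.2

end SpanningForest

section Fintype

variable [Fintype V]

theorem mem_edgeFin {H : SimpleGraph V} {e : Sym2 V} : e ∈ edgeFin H ↔ e ∈ H.edgeSet := by
  simp [edgeFin]

theorem edgeFin_mono {H H' : SimpleGraph V} (h : H ≤ H') : edgeFin H ⊆ edgeFin H' :=
  fun _ he => mem_edgeFin.mpr (edgeSet_mono h (mem_edgeFin.mp he))

theorem disjoint_edgeFin {H H' : SimpleGraph V} (h : Disjoint H H') :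
    Disjoint (edgeFin H) (edgeFin H') :=
  Finset.disjoint_left.mpr fun _ he he' =>
    Set.disjoint_left.mp (disjoint_edgeSet.mpr h) (mem_edgeFin.mp he) (mem_edgeFin.mp he')

/-- Extending the forest to a spanning tree of the complete graph bounds its edges by `|V| - 1`. -/
theorem IsAcyclic.card_edgeFin_le {H : SimpleGraph V} (hH : H.IsAcyclic) :
    (edgeFin H).card ≤ Fintype.card V := by
  cases isEmpty_or_nonempty V
  · simp [edgeFin]
  obtain ⟨T, hHT, -, hT⟩ := connected_top.exists_isTree_le_of_le_of_isAcyclic le_top hH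
  have hcard := hT.card_edgeFinset
  have hT_eq : edgeFin T = T.edgeFinset := by ext; simp [edgeFin]
  calc (edgeFin H).card ≤ (edgeFin T).card := Finset.card_le_card (edgeFin_mono hHT)
    _ ≤ Fintype.card V := by rw [hT_eq]; omega

theorem mem_cutEdges_of_adj {G : SimpleGraph V} {S : Finset V} {x y : V} (h : G.Adj x y)
    (hx : x ∈ S) (hy : y ∉ S) : s(x, y) ∈ cutEdges G S :=
  Finset.mem_filter.mpr ⟨Finset.mem_univ _, h, x, y, rfl, hx, hy⟩

theorem Reachable.exists_mem_cutEdges {G H : SimpleGraph V} (hHG : H ≤ G) {S : Finset V}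
    {u v : V} (h : H.Reachable u v) (hu : u ∈ S) (hv : v ∉ S) :
    (cutEdges G S ∩ edgeFin H).Nonempty := by
  obtain ⟨p⟩ := h
  obtain ⟨d, -, hd₁, hd₂⟩ := p.exists_boundary_dart (S : Set V) hu hv
  exact ⟨s(d.fst, d.snd), Finset.mem_inter.mpr
    ⟨mem_cutEdges_of_adj (hHG d.adj) hd₁ hd₂, mem_edgeFin.mpr d.adj⟩⟩

end Fintype

section GreedyForests

variable (G : SimpleGraph V)

def greedyResidual : ℕ → SimpleGraph V
  | 0 => G
  | i + 1 => greedyResidual i \ (greedyResidual i).spanningForest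

def greedyForest (i : ℕ) : SimpleGraph V := (G.greedyResidual i).spanningForest

theorem greedyResidual_antitone : Antitone G.greedyResidual :=
  antitone_nat_of_succ_le fun _ => sdiff_le

theorem greedyForest_le (i : ℕ) : G.greedyForest i ≤ G :=
  (spanningForest_le _).trans (G.greedyResidual_antitone (Nat.zero_le i))

theorem disjoint_greedyForest_of_lt {i j : ℕ} (hij : i < j) :
    Disjoint (G.greedyForest i) (G.greedyForest j) :=
  (disjoint_sdiff_self_left.mono_left
    ((spanningForest_le _).trans (G.greedyResidual_antitone hij))).symm

variable {G}

theorem greedyResidual_adj {u v : V} (h : G.Adj u v) {n : ℕ}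
    (hF : ∀ i < n, ¬(G.greedyForest i).Adj u v) : (G.greedyResidual n).Adj u v := by
  induction n with
  | zero => exact h
  | succ n ih => exact (sdiff_adj _ _ _ _).mpr ⟨ih fun i hi => hF i (by omega), hF n (by omega)⟩

theorem greedyForest_reachable {u v : V} (h : G.Adj u v) {n : ℕ}
    (hF : ∀ i < n, ¬(G.greedyForest i).Adj u v) : (G.greedyForest n).Reachable u v := by
  rw [greedyForest, reachable_spanningForest]
  exact (greedyResidual_adj h hF).reachable

end GreedyForests

section Certificate

variable [Fintype V] (G : SimpleGraph V) (k : ℕ)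

def greedyCertificate : Finset (Sym2 V) :=
  (Finset.range k).biUnion fun i => edgeFin (G.greedyForest i)

theorem greedyCertificate_subset : G.greedyCertificate k ⊆ edgeFin G :=
  Finset.biUnion_subset.mpr fun i _ => edgeFin_mono (G.greedyForest_le i)

theorem card_greedyCertificate_le : (G.greedyCertificate k).card ≤ k * Fintype.card V :=
  calc (G.greedyCertificate k).card ≤ ∑ i ∈ Finset.range k, (edgeFin (G.greedyForest i)).card :=
        Finset.card_biUnion_le
    _ ≤ ∑ _i ∈ Finset.range k, Fintype.card V :=
        Finset.sum_le_sum fun i _ => (isAcyclic_spanningForest _).card_edgeFin_le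
    _ = k * Fintype.card V := by simp

theorem cutEdges_subset_greedyCertificate {S : Finset V} (hS : (cutEdges G S).card ≤ k) :
    cutEdges G S ⊆ G.greedyCertificate k := by
  intro e he
  by_contra hne
  obtain ⟨-, heG, u, v, rfl, hu, hv⟩ := Finset.mem_filter.mp he
  have hnot : ∀ i ∈ Finset.range k, s(u, v) ∉ edgeFin (G.greedyForest i) := fun i hi hmem =>
    hne (Finset.mem_biUnion.mpr ⟨i, hi, hmem⟩)
  have hreach : ∀ i ∈ Finset.range k, (G.greedyForest i).Reachable u v := fun i hi =>
    greedyForest_reachable heG fun j hj hadj =>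
      hnot j (Finset.mem_range.mpr (hj.trans (Finset.mem_range.mp hi))) (mem_edgeFin.mpr hadj)
  have hmeet : ∀ i ∈ Finset.range k, (cutEdges G S ∩ edgeFin (G.greedyForest i)).Nonempty :=
    fun i hi => (hreach i hi).exists_mem_cutEdges (G.greedyForest_le i) hu hv
  have hdisj : (Finset.range k : Set ℕ).PairwiseDisjoint fun i => edgeFin (G.greedyForest i) :=
    fun i _ j _ hij => disjoint_edgeFin <| by
      rcases hij.lt_or_gt with h | h
      exacts [G.disjoint_greedyForest_of_lt h, (G.disjoint_greedyForest_of_lt h).symm]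
  have := Finset.card_lt_card_of_pairwiseDisjoint_inter_nonempty hdisj hmeet he hnot
  simp only [Finset.card_range] at this
  omega

end Certificate

end SimpleGraph

theorem statement9_general {V : Type*} [Fintype V] (G : SimpleGraph V) (k : ℕ) :
    ∃ Estar : Finset (Sym2 V), Estar ⊆ edgeFin G ∧ Estar.card ≤ k * Fintype.card V ∧
      ∀ S : Finset V, S.Nonempty → S ≠ Finset.univ → (cutEdges G S).card ≤ k →
        cutEdges G S ⊆ Estar :=
  ⟨G.greedyCertificate k, G.greedyCertificate_subset k, G.card_greedyCertificate_le k,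
    fun _ _ _ hS => G.cutEdges_subset_greedyCertificate k hS⟩

/-- Sparse certificates exist: for every finite simple graph `G` and
`k ≥ 1` there is `E* ⊆ E` with `|E*| ≤ k·|V|` containing every edge that lies in some
cut of size at most `k`. -/
theorem statement9 {V : Type*} [Fintype V] (G : SimpleGraph V) (k : ℕ) (hk : 1 ≤ k) :
    ∃ Estar : Finset (Sym2 V), Estar ⊆ edgeFin G ∧ Estar.card ≤ k * Fintype.card V ∧
      ∀ S : Finset V, S.Nonempty → S ≠ Finset.univ → (cutEdges G S).card ≤ k →
        cutEdges G S ⊆ Estar :=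
  statement9_general G k
end
end

section
/- Let n and k be positive integers with k dividing n and k ≤ n. On the vertex set {0,…,n−1}, let E₂ be the set of pairs {i, j} with j = i + k·2^s for some integer s ≥ 1 such that i is divisible by k·2^s and j ≤ n−1. Then for every h ∈ {0,…,n−1}, the number of pairs {i,j} ∈ E₂ with i ≤ h and j ≥ h + k + 1 is at most log₂(n/k). -/
open Classical

/-! A crossing pair `(i, i + k·2^s)` has `i ≤ h < i + k·2^s` with `k·2^s ∣ i`, so `i` is the unique
multiple of `k·2^s` in `(h - k·2^s, h]`: the pair is determined by its scale `s`. Since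
`k·2^s < n`, the scale satisfies `1 ≤ s ≤ log₂ (n / k)`. -/

noncomputable def shortcutCrossings (n k h : ℕ) : Finset (ℕ × ℕ) :=
  (Finset.range n ×ˢ Finset.range n).filter (fun q : ℕ × ℕ =>
    (∃ s : ℕ, 1 ≤ s ∧ (k * 2 ^ s) ∣ q.1 ∧ q.2 = q.1 + k * 2 ^ s) ∧
    q.1 ≤ h ∧ h + k + 1 ≤ q.2)

lemma eq_mul_div_of_dvd_of_le_of_lt_add {d i h : ℕ} (hd : d ∣ i) (hih : i ≤ h)
    (hhi : h < i + d) : i = d * (h / d) := by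
  obtain ⟨a, rfl⟩ := hd
  rw [Nat.div_eq_of_lt_le (by rw [mul_comm]; exact hih) (by rw [add_mul, one_mul, mul_comm]; exact hhi)]

lemma shortcutCrossings_subset_image {n k h : ℕ} (hk : 0 < k) :
    shortcutCrossings n k h ⊆ (Finset.Icc 1 (Nat.log 2 (n / k))).image
      (fun s => (k * 2 ^ s * (h / (k * 2 ^ s)), k * 2 ^ s * (h / (k * 2 ^ s)) + k * 2 ^ s)) := by
  rintro ⟨i, j⟩ hq
  simp only [shortcutCrossings, Finset.mem_filter, Finset.mem_product, Finset.mem_range] at hq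
  obtain ⟨⟨-, hjn⟩, ⟨s, hs, hdvd, rfl⟩, hih, hhj⟩ := hq
  have hpow : 2 ^ s ≤ n / k := by
    rw [Nat.le_div_iff_mul_le hk, mul_comm]
    omega
  refine Finset.mem_image.2 ⟨s, Finset.mem_Icc.2 ⟨hs, Nat.le_log_of_pow_le one_lt_two hpow⟩, ?_⟩
  rw [← eq_mul_div_of_dvd_of_le_of_lt_add hdvd hih (by omega)]

lemma card_shortcutCrossings_le {n k h : ℕ} (hk : 0 < k) :
    (shortcutCrossings n k h).card ≤ Nat.log 2 (n / k) :=
  calc (shortcutCrossings n k h).card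
      _ ≤ _ := Finset.card_le_card (shortcutCrossings_subset_image hk)
      _ ≤ (Finset.Icc 1 (Nat.log 2 (n / k))).card := Finset.card_image_le
      _ = Nat.log 2 (n / k) := by simp

theorem statement12_general (n k : ℕ) (hk : 0 < k) (hdvd : k ∣ n) (h : ℕ) :
    (((Finset.range n ×ˢ Finset.range n).filter (fun q : ℕ × ℕ =>
        (∃ s : ℕ, 1 ≤ s ∧ (k * 2 ^ s) ∣ q.1 ∧ q.2 = q.1 + k * 2 ^ s) ∧
        q.1 ≤ h ∧ h + k + 1 ≤ q.2)).card : ℝ) ≤ Real.logb 2 ((n : ℝ) / k) :=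
  calc ((shortcutCrossings n k h).card : ℝ)
      _ ≤ Nat.log 2 (n / k) := by exact_mod_cast card_shortcutCrossings_le hk
      _ ≤ Real.logb 2 ((n / k : ℕ) : ℝ) := by exact_mod_cast Real.natLog_le_logb (n / k) 2
      _ = Real.logb 2 ((n : ℝ) / k) := by rw [Nat.cast_div_charZero hdvd]

/-- For the shortcut edges `E₂ = {{i, i + k·2^s} : s ≥ 1, k·2^s ∣ i}`
on `{0, …, n-1}`, for every `h`, at most `log₂(n/k)` of these pairs `{i,j}` satisfy
`i ≤ h` and `j ≥ h + k + 1`. -/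
theorem statement12 (n k : ℕ) (hk : 0 < k) (hdvd : k ∣ n) (hkn : k ≤ n)
    (h : ℕ) (hh : h ≤ n - 1) :
    (((Finset.range n ×ˢ Finset.range n).filter (fun q : ℕ × ℕ =>
        (∃ s : ℕ, 1 ≤ s ∧ (k * 2 ^ s) ∣ q.1 ∧ q.2 = q.1 + k * 2 ^ s) ∧
        q.1 ≤ h ∧ h + k + 1 ≤ q.2)).card : ℝ) ≤ Real.logb 2 ((n : ℝ) / k) :=
  statement12_general n k hk hdvd h
end

section
/- Let n and k be positive integers with k dividing n, and set ℓ = n/k. On the vertex set V = {0,…,n−1}, define the simple graph H whose edge set is E₁ ∪ E₂ ∪ E₃ where: E₁ = {{i, i+k} : 0 ≤ i ≤ n−k−1}; E₂ = {{i, i + k·2^s} : s ≥ 1, k·2^s divides i, i + k·2^s ≤ n−1}; and E₃ = {{i, i+r} : i divisible by k, 1 ≤ r ≤ k−1, i + r ≤ n−1}. Then H is connected and there exists an absolute constant C > 0 such that the diameter of H is at most C·(1 + log₂(n/k)). -/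
/-!
Every vertex is close to `0`. Write a vertex as `k * q + r` with `r < k`. Starting from `0`, run
along the multiples of `k` by adding the binary digits of `q` from the most significant one down:
before the jump by `k * 2 ^ s` the position `k * t` has `2 ^ s ∣ t`, since only larger powers of
two have been added, so the jump is an `E₁`-edge (`s = 0`) or an `E₂`-edge. This takes at most
`log₂ q + 1` steps, and one `E₃`-edge then reaches `k * q + r`. Hence every vertex is within
`log₂(n/k) + 2` of `0`, and the diameter is at most twice that.
-/

open Classical

/-- The graph `H` of the lower-bound construction on vertex set `{0, …, n-1}`:
`E₁`-edges `{i, i+k}`, `E₂`-shortcut edges `{i, i + k·2^s}` for `s ≥ 1` and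
`k·2^s ∣ i`, and `E₃`-star edges `{i, i+r}` for `k ∣ i` and `1 ≤ r ≤ k-1`. -/
def pathsGraph (n k : ℕ) : SimpleGraph (Fin n) :=
  SimpleGraph.fromRel (fun i j =>
    ((j : ℕ) = (i : ℕ) + k) ∨
    (∃ s : ℕ, 1 ≤ s ∧ (k * 2 ^ s) ∣ (i : ℕ) ∧ (j : ℕ) = (i : ℕ) + k * 2 ^ s) ∨
    (k ∣ (i : ℕ) ∧ (i : ℕ) < (j : ℕ) ∧ (j : ℕ) < (i : ℕ) + k))

namespace SimpleGraph

variable {V : Type*} {G : SimpleGraph V}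

lemma connected_and_dist_le_of_forall_edist_le (o : V) {d : ℕ} (h : ∀ v, G.edist o v ≤ d) :
    G.Connected ∧ ∀ u v, G.dist u v ≤ 2 * d := by
  have hedist : ∀ u v, G.edist u v ≤ (2 * d : ℕ) := fun u v =>
    calc G.edist u v ≤ G.edist o u + G.edist o v := edist_comm (u := u) ▸ G.edist_triangle
      _ ≤ d + d := add_le_add (h u) (h v)
      _ = (2 * d : ℕ) := by push_cast; ring
  have hreach : ∀ u v, G.Reachable u v := fun u v =>
    reachable_of_edist_ne_top (ne_top_of_le_ne_top (ENat.natCast_ne_top _) (hedist u v))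
  have : Nonempty V := ⟨o⟩
  refine ⟨⟨hreach⟩, fun u v => ?_⟩
  have := (hreach u v).coe_dist_eq_edist ▸ hedist u v
  exact_mod_cast this

end SimpleGraph

open SimpleGraph

variable {n k : ℕ}

lemma pathsGraph_adj_of_shortcut (hk : 0 < k) {u v : Fin n} {t s : ℕ} (ht : 2 ^ s ∣ t)
    (hu : (u : ℕ) = k * t) (hv : (v : ℕ) = k * (t + 2 ^ s)) : (pathsGraph n k).Adj u v := by
  have hne : u ≠ v := by
    rw [Ne, Fin.ext_iff, hu, hv]
    have : 0 < k * 2 ^ s := by positivity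
    lia
  rw [pathsGraph, fromRel_adj]
  refine ⟨hne, Or.inl ?_⟩
  rcases Nat.eq_zero_or_pos s with rfl | hs
  · left
    rw [hu, hv]
    ring
  · right; left
    exact ⟨s, hs, hu ▸ mul_dvd_mul_left k ht, by rw [hu, hv]; ring⟩

lemma pathsGraph_adj_of_star {u v : Fin n} (hu : k ∣ (u : ℕ)) (huv : u < v)
    (hvu : (v : ℕ) < u + k) : (pathsGraph n k).Adj u v := by
  rw [pathsGraph, fromRel_adj]
  exact ⟨huv.ne, Or.inl (Or.inr (Or.inr ⟨hu, huv, hvu⟩))⟩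

lemma pathsGraph_edist_le_of_lt_two_pow (hk : 0 < k) (s : ℕ) :
    ∀ {m t : ℕ}, m < 2 ^ s → 2 ^ s ∣ t → ∀ {u v : Fin n},
      (u : ℕ) = k * t → (v : ℕ) = k * (t + m) → (pathsGraph n k).edist u v ≤ s := by
  induction s with
  | zero =>
    intro m t hm _ u v hu hv
    obtain rfl : u = v := Fin.ext (by simp_all)
    simp
  | succ s ih =>
    intro m t hm ht u v hu hv
    have hts : 2 ^ s ∣ t := (pow_dvd_pow 2 s.le_succ).trans ht
    by_cases hms : m < 2 ^ s
    · exact (ih hms hts hu hv).trans (by norm_cast; lia)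
    obtain ⟨m', rfl⟩ : ∃ m', m = 2 ^ s + m' := ⟨m - 2 ^ s, by lia⟩
    have hm' : m' < 2 ^ s := by rw [pow_succ] at hm; lia
    let w : Fin n := ⟨k * (t + 2 ^ s), lt_of_le_of_lt (by rw [hv]; gcongr; lia) v.isLt⟩
    calc (pathsGraph n k).edist u v
        ≤ (pathsGraph n k).edist u w + (pathsGraph n k).edist w v := SimpleGraph.edist_triangle
      _ ≤ 1 + s := add_le_add (edist_eq_one_iff_adj.2 (pathsGraph_adj_of_shortcut hk hts hu rfl)).le
          (ih hm' (dvd_add hts dvd_rfl) rfl (by rw [hv]; ring))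
      _ = (s + 1 : ℕ) := by push_cast; ring

lemma pathsGraph_edist_zero_le [NeZero n] (hk : 0 < k) (v : Fin n) :
    (pathsGraph n k).edist 0 v ≤ (Nat.log 2 (v / k) + 2 : ℕ) := by
  set q := (v : ℕ) / k
  have hv : k * q + (v : ℕ) % k = v := Nat.div_add_mod v k
  let w : Fin n := ⟨k * q, (Nat.mul_div_le v k).trans_lt v.isLt⟩
  have h0w : (pathsGraph n k).edist 0 w ≤ (Nat.log 2 q + 1 : ℕ) :=
    pathsGraph_edist_le_of_lt_two_pow hk _ (Nat.lt_pow_succ_log_self one_lt_two q) (dvd_zero _)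
      (by simp) (by simp [w])
  have hr : (v : ℕ) % k < k := Nat.mod_lt v hk
  have hwv : (pathsGraph n k).edist w v ≤ 1 := by
    rw [edist_le_one_iff_adj_or_eq]
    by_cases hr0 : (v : ℕ) % k = 0
    · exact Or.inr (Fin.ext (by simp only [w]; lia))
    · exact Or.inl (pathsGraph_adj_of_star ⟨q, rfl⟩ (Fin.lt_def.2 (by simp only [w]; lia))
        (by simp only [w]; lia))
  calc (pathsGraph n k).edist 0 v
      ≤ (pathsGraph n k).edist 0 w + (pathsGraph n k).edist w v := SimpleGraph.edist_triangle
    _ ≤ (Nat.log 2 q + 1 : ℕ) + 1 := add_le_add h0w hwv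
    _ = (Nat.log 2 q + 2 : ℕ) := by push_cast; ring

/-- The graph `H` is connected and has diameter `O(1 + log₂(n/k))`
for an absolute constant. -/
theorem statement13 :
    ∃ C : ℝ, 0 < C ∧ ∀ n k : ℕ, 0 < k → k ∣ n → 0 < n →
      (pathsGraph n k).Connected ∧
      ∀ u v : Fin n,
        ((pathsGraph n k).dist u v : ℝ) ≤ C * (1 + Real.logb 2 ((n : ℝ) / k)) := by
  refine ⟨4, by norm_num, fun n k hk hkn hn => ?_⟩
  have : NeZero n := ⟨hn.ne'⟩
  set L := Nat.log 2 (n / k)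
  have hradius : ∀ v : Fin n, (pathsGraph n k).edist 0 v ≤ (L + 2 : ℕ) := fun v =>
    (pathsGraph_edist_zero_le hk v).trans
      (by gcongr; exact Nat.log_mono_right (Nat.div_le_div_right v.isLt.le))
  obtain ⟨hconn, hdist⟩ := connected_and_dist_le_of_forall_edist_le 0 hradius
  refine ⟨hconn, fun u v => ?_⟩
  have hL : (L : ℝ) ≤ Real.logb 2 ((n : ℝ) / k) := by
    simpa [Nat.cast_div hkn (Nat.cast_ne_zero.2 hk.ne')] using Real.natLog_le_logb (n / k) 2
  calc ((pathsGraph n k).dist u v : ℝ) ≤ (2 * (L + 2) : ℕ) := by exact_mod_cast hdist u v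
    _ ≤ 4 * (1 + Real.logb 2 ((n : ℝ) / k)) := by push_cast; linarith [L.cast_nonneg (α := ℝ)]
end

section
/- Let k ≥ 2 and ℓ ≥ 2 be integers, n = kℓ, let α ≥ 1 be a real number, set W = αℓ + 1, and let X, Y ⊆ {1,…,k−1} be sets with X ∩ Y = {z} for a single element z. Define a weighted simple graph G on V = {0,…,n−1} with the following edges and positive edge weights: (a) for each 0 ≤ i ≤ n−k−1 an edge {i, i+k} of weight W; (b) for each integer s ≥ 1 and each i divisible by k·2^s with i + k·2^s ≤ n−1, an edge {i, i+k·2^s} of weight 1; (c) for each g ∈ {0,…,ℓ−1} and each x ∈ {1,…,k−1}, an edge {gk, gk+x}, with weight W if (g = 0 and x ∉ X) or (g = ℓ−1 and x ∉ Y), and weight 1 otherwise. Let S_z = {i ∈ V : i ≡ z (mod k)}. Then the total weight of the edges crossing the cut (S_z, V ∖ S_z) equals ℓ, and for every nonempty proper vertex set S ⊆ V with S ≠ S_z and S ≠ V ∖ S_z, the total weight of the edges crossing (S, V ∖ S) is at least αℓ + 1. -/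
/-!
Edge weights are nonnegative, so a cut of weight less than `W` never separates the two ends of a
heavy edge. The heavy edges `{i, i + k}` join each residue class mod `k` into a path, and since
`X ∩ Y = {z}`, every residue `x ∉ {0, z}` lies outside `X` or outside `Y`, so a heavy star edge at
the first or at the last block joins its path to the path of `0`. Thus the heavy graph has exactly
the two components `S_z` and `V ∖ S_z`, and every other nontrivial cut has weight at least `W`.
The cut around `S_z` consists of the `ℓ` star edges `{gk, gk + z}`, all light because `z ∈ X ∩ Y`.
-/

open Classical

open Finset

namespace LowerBoundGraph

/-- The weight of the edge `{a, b}`, read for `a < b` only. -/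
noncomputable def edgeWeight (k ℓ : ℕ) (W : ℝ) (X Y : Finset ℕ) (a b : ℕ) : ℝ :=
  if b = a + k then W
  else if ∃ s : ℕ, 1 ≤ s ∧ (k * 2 ^ s) ∣ a ∧ b = a + k * 2 ^ s then 1
  else if k ∣ a ∧ b < a + k then
    (if (a = 0 ∧ b - a ∉ X) ∨ (a = (ℓ - 1) * k ∧ b - a ∉ Y) then W else 1)
  else 0

def residueClass (n k z : ℕ) : Finset (Fin n) := univ.filter fun i : Fin n => (i : ℕ) % k = z

@[simp]
theorem mem_residueClass {n k z : ℕ} {i : Fin n} : i ∈ residueClass n k z ↔ (i : ℕ) % k = z := by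
  simp [residueClass]

section edgeWeight

variable {k ℓ : ℕ} {W : ℝ} {X Y : Finset ℕ}

theorem edgeWeight_add_self (a : ℕ) : edgeWeight k ℓ W X Y a (a + k) = W := if_pos rfl

theorem edgeWeight_nonneg (hW : 0 ≤ W) (a b : ℕ) : 0 ≤ edgeWeight k ℓ W X Y a b := by
  unfold edgeWeight
  split_ifs <;> first | exact hW | norm_num

theorem edgeWeight_star {a x : ℕ} (hka : k ∣ a) (hxk : x < k) :
    edgeWeight k ℓ W X Y a (a + x) =
      if (a = 0 ∧ x ∉ X) ∨ (a = (ℓ - 1) * k ∧ x ∉ Y) then W else 1 := by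
  have hpow : ¬ ∃ s, 1 ≤ s ∧ k * 2 ^ s ∣ a ∧ a + x = a + k * 2 ^ s := by
    rintro ⟨s, -, -, h⟩
    have : k ≤ k * 2 ^ s := Nat.le_mul_of_pos_right k (by positivity)
    omega
  rw [edgeWeight, if_neg (by omega), if_neg hpow, if_pos ⟨hka, by omega⟩, Nat.add_sub_cancel_left]

theorem edgeWeight_first_block_of_notMem {x : ℕ} (hxk : x < k) (hxX : x ∉ X) :
    edgeWeight k ℓ W X Y 0 x = W := by
  simpa [hxX] using edgeWeight_star (ℓ := ℓ) (W := W) (X := X) (Y := Y) (dvd_zero k) hxk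

theorem edgeWeight_last_block_of_notMem {x : ℕ} (hxk : x < k) (hxY : x ∉ Y) :
    edgeWeight k ℓ W X Y ((ℓ - 1) * k) ((ℓ - 1) * k + x) = W := by
  simp [edgeWeight_star (dvd_mul_left k _) hxk, hxY]

theorem edgeWeight_star_of_mem_inter {a z : ℕ} (hka : k ∣ a) (hzk : z < k) (hzX : z ∈ X)
    (hzY : z ∈ Y) : edgeWeight k ℓ W X Y a (a + z) = 1 := by
  simp [edgeWeight_star hka hzk, hzX, hzY]

theorem mod_eq_or_of_edgeWeight_ne_zero {a b : ℕ} (h : edgeWeight k ℓ W X Y a b ≠ 0) :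
    b % k = a % k ∨ (k ∣ a ∧ b < a + k) := by
  unfold edgeWeight at h
  split_ifs at h with hk hpow hstar
  · simp [hk]
  · obtain ⟨s, -, -, rfl⟩ := hpow
    exact Or.inl (Nat.add_mul_mod_self_left a k _)
  · exact Or.inr hstar
  · exact Or.inr hstar
  · exact absurd rfl h

end edgeWeight

section cut

variable {V : Type*} [Fintype V] [DecidableEq V] {w : V → V → ℝ} {S : Finset V} {a b : V}

theorem le_sum_cut (hw : ∀ u v, u ≠ v → 0 ≤ w u v) (ha : a ∈ S) (hb : b ∉ S) :
    w a b ≤ ∑ u ∈ S, ∑ v ∈ Sᶜ, w u v := by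
  have hcross : ∀ u ∈ S, ∀ v ∈ Sᶜ, 0 ≤ w u v := fun u hu v hv =>
    hw u v fun h => (mem_compl.1 hv) (h ▸ hu)
  calc w a b ≤ ∑ v ∈ Sᶜ, w a v := single_le_sum (hcross a ha) (mem_compl.2 hb)
    _ ≤ ∑ u ∈ S, ∑ v ∈ Sᶜ, w u v :=
      single_le_sum (f := fun u => ∑ v ∈ Sᶜ, w u v) (fun u hu => sum_nonneg (hcross u hu)) ha

theorem mem_iff_mem_of_sum_cut_lt (hw : ∀ u v, u ≠ v → 0 ≤ w u v)
    (hsymm : ∀ u v, w u v = w v u) (hS : ∑ u ∈ S, ∑ v ∈ Sᶜ, w u v < w a b) : a ∈ S ↔ b ∈ S := by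
  constructor
  · intro ha
    by_contra hb
    exact (le_sum_cut hw ha hb).not_gt hS
  · intro hb
    by_contra ha
    exact (le_sum_cut hw hb ha).not_gt (hsymm a b ▸ hS)

end cut

section graph

variable {k ℓ n z : ℕ} {W : ℝ} {X Y : Finset ℕ} {ew : ℕ → ℕ → ℝ}

theorem ew_nonneg (hew : ∀ a b, a < b → b ≤ n - 1 → ew a b = edgeWeight k ℓ W X Y a b)
    (hsymm : ∀ a b, ew a b = ew b a) (hW : 0 ≤ W) {a b : ℕ} (hab : a ≠ b) (ha : a < n)
    (hb : b < n) : 0 ≤ ew a b := by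
  rcases hab.lt_or_gt with h | h
  · rw [hew a b h (by omega)]
    exact edgeWeight_nonneg hW a b
  · rw [hsymm, hew b a h (by omega)]
    exact edgeWeight_nonneg hW b a

theorem ew_eq_zero_of_mod_ne
    (hew : ∀ a b, a < b → b ≤ n - 1 → ew a b = edgeWeight k ℓ W X Y a b)
    (hsymm : ∀ a b, ew a b = ew b a) (hz : 0 < z) {u v : ℕ} (hu : u < n) (hv : v < n)
    (huz : u % k = z) (hvz : v % k ≠ z) (hvu : v ≠ u / k * k) : ew u v = 0 := by
  have hku : ¬ k ∣ u := by rw [Nat.dvd_iff_mod_eq_zero]; omega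
  by_contra hne
  rcases lt_or_gt_of_ne (fun h : u = v => hvz (h ▸ huz)) with h | h
  · rw [hew u v h (by omega)] at hne
    rcases mod_eq_or_of_edgeWeight_ne_zero hne with hmod | ⟨hdvd, -⟩
    · exact hvz (hmod.trans huz)
    · exact hku hdvd
  · rw [hsymm, hew v u h (by omega)] at hne
    rcases mod_eq_or_of_edgeWeight_ne_zero hne with hmod | ⟨⟨c, rfl⟩, hlt⟩
    · exact hvz (hmod ▸ huz)
    · refine hvu ?_
      rw [Nat.div_eq_of_lt_le (by linarith) (by rw [Nat.succ_mul]; linarith), mul_comm]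

theorem sum_compl_residueClass_eq_one
    (hew : ∀ a b, a < b → b ≤ n - 1 → ew a b = edgeWeight k ℓ W X Y a b)
    (hsymm : ∀ a b, ew a b = ew b a) (hz : 0 < z) (hzk : z < k) (hzX : z ∈ X) (hzY : z ∈ Y)
    {u : Fin n} (huz : (u : ℕ) % k = z) :
    ∑ v ∈ (residueClass n k z)ᶜ, ew u v = 1 := by
  have hu : (u : ℕ) = u / k * k + z := by rw [← huz, Nat.div_add_mod']
  let head : Fin n := ⟨u / k * k, by omega⟩
  have hhead : head ∈ (residueClass n k z)ᶜ := by
    simp only [mem_compl, mem_residueClass, Nat.mul_mod_left, head]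
    omega
  rw [sum_eq_single_of_mem head hhead]
  · change ew u (u / k * k) = 1
    rw [hsymm, hew _ _ (by omega) (by omega)]
    nth_rewrite 2 [hu]
    exact edgeWeight_star_of_mem_inter (dvd_mul_left k _) hzk hzX hzY
  · intro v hv hvhead
    simp only [mem_compl, mem_residueClass] at hv
    exact ew_eq_zero_of_mod_ne hew hsymm hz u.isLt v.isLt huz hv fun h => hvhead (Fin.ext h)

theorem iff_of_heavy_invariant (hn : n = k * ℓ) (hXY : X ∩ Y = {z}) (p : ℕ → Prop)
    (hp : ∀ a b, a < b → b < n → edgeWeight k ℓ W X Y a b = W → (p a ↔ p b)) {u : ℕ}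
    (hu : u < n) : p u ↔ p (if u % k = z then z else 0) := by
  subst hn
  have hk : 0 < k := Nat.pos_of_ne_zero (by rintro rfl; simp at hu)
  have hℓ : 0 < ℓ := Nat.pos_of_ne_zero (by rintro rfl; simp at hu)
  have hlast : (ℓ - 1) * k + k = k * ℓ := by
    rw [← Nat.succ_mul, Nat.succ_eq_add_one, Nat.sub_add_cancel hℓ, mul_comm]
  have hpath : ∀ x g, x + g * k < k * ℓ → (p (x + g * k) ↔ p x) := by
    intro x g
    induction g with
    | zero => simp
    | succ g ih =>
      intro h
      rw [Nat.succ_mul, ← add_assoc] at h ⊢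
      rw [← ih (by omega)]
      exact (hp _ _ (by omega) h (edgeWeight_add_self _)).symm
  have hux := hpath (u % k) (u / k) (by rwa [Nat.mod_add_div'])
  rw [Nat.mod_add_div'] at hux
  rw [hux]
  have hxk : u % k < k := Nat.mod_lt u hk
  generalize u % k = x at hxk ⊢
  split_ifs with hxz
  · rw [hxz]
  rcases Nat.eq_zero_or_pos x with rfl | hx0
  · rfl
  have hxXY : x ∉ X ∨ x ∉ Y := by
    rw [← not_and_or, ← mem_inter, hXY, mem_singleton]
    exact hxz
  rcases hxXY with hxX | hxY
  · exact (hp 0 x hx0 (by nlinarith) (edgeWeight_first_block_of_notMem hxk hxX)).symm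
  · calc p x ↔ p (x + (ℓ - 1) * k) := (hpath x (ℓ - 1) (by omega)).symm
      _ ↔ p ((ℓ - 1) * k) := by
        rw [add_comm]
        exact (hp _ _ (by omega) (by omega) (edgeWeight_last_block_of_notMem hxk hxY)).symm
      _ ↔ p 0 := by simpa using hpath 0 (ℓ - 1) (by omega)

theorem eq_of_sum_cut_lt (hn : n = k * ℓ) (hXY : X ∩ Y = {z}) (hW : 0 ≤ W)
    (hew : ∀ a b, a < b → b ≤ n - 1 → ew a b = edgeWeight k ℓ W X Y a b)
    (hsymm : ∀ a b, ew a b = ew b a) {S : Finset (Fin n)}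
    (hS : ∑ u ∈ S, ∑ v ∈ Sᶜ, ew u v < W) :
    S = ∅ ∨ S = univ ∨ S = residueClass n k z ∨ S = (residueClass n k z)ᶜ := by
  let p (m : ℕ) : Prop := ∃ h : m < n, (⟨m, h⟩ : Fin n) ∈ S
  have hp : ∀ a b, a < b → b < n → edgeWeight k ℓ W X Y a b = W → (p a ↔ p b) := by
    intro a b hab hb hheavy
    have hS' : ∑ u ∈ S, ∑ v ∈ Sᶜ, ew u v < ew a b := by rwa [hew a b hab (by omega), hheavy]
    have := mem_iff_mem_of_sum_cut_lt (w := fun u v : Fin n => ew u v) (a := ⟨a, by omega⟩)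
      (b := ⟨b, hb⟩) (fun u v huv => ew_nonneg hew hsymm hW (Fin.val_ne_of_ne huv) u.isLt v.isLt)
      (fun u v => hsymm u v) hS'
    exact ⟨fun ⟨_, ha⟩ => ⟨hb, this.1 ha⟩, fun ⟨_, hb⟩ => ⟨by omega, this.2 hb⟩⟩
  have hmem : ∀ u : Fin n, u ∈ S ↔ p (if u % k = z then z else 0) := fun u =>
    (iff_of_eq (by simp [p])).trans (iff_of_heavy_invariant hn hXY p hp u.isLt)
  by_cases h0 : p 0 <;> by_cases hz : p z
  · exact Or.inr (Or.inl (eq_univ_of_forall fun u => (hmem u).2 (by split_ifs <;> assumption)))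
  · refine Or.inr (Or.inr (Or.inr ?_))
    ext u
    rw [hmem u]
    split_ifs with h <;> simp [h, h0, hz]
  · refine Or.inr (Or.inr (Or.inl ?_))
    ext u
    rw [hmem u]
    split_ifs with h <;> simp [h, h0, hz]
  · exact Or.inl (eq_empty_of_forall_notMem fun u hu => by
      rw [hmem u] at hu
      split_ifs at hu <;> contradiction)

end graph

theorem card_residueClass {k ℓ z : ℕ} (hz : z < k) : #(residueClass (k * ℓ) k z) = ℓ := by
  have hcount := Nat.count_modEq_card (b := k * ℓ) (r := k) (by omega) z
  rw [Nat.count_eq_card_filter_range, Nat.mul_mod_right,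
    Nat.mul_div_cancel_left _ (by omega)] at hcount
  rw [← card_map Fin.valEmbedding]
  convert hcount using 2
  · ext x
    simp only [mem_map, mem_residueClass, Fin.valEmbedding_apply, mem_filter, mem_range,
      Nat.ModEq, Nat.mod_eq_of_lt hz]
    exact ⟨fun ⟨a, ha, hax⟩ => hax ▸ ⟨a.isLt, ha⟩, fun ⟨hx, h⟩ => ⟨⟨x, hx⟩, h, rfl⟩⟩
  · simp

end LowerBoundGraph

open LowerBoundGraph in
theorem statement14_general (k ℓ n : ℕ) (hn : n = k * ℓ)
    (α : ℝ) (hα : 1 ≤ α) (W : ℝ) (hW : W = α * ℓ + 1)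
    (X Y : Finset ℕ) (hX : X ⊆ Finset.Icc 1 (k - 1))
    (z : ℕ) (hXY : X ∩ Y = {z})
    (ew : ℕ → ℕ → ℝ)
    (hew : ∀ a b : ℕ, a < b → b ≤ n - 1 →
      ew a b =
        if b = a + k then W
        else if ∃ s : ℕ, 1 ≤ s ∧ (k * 2 ^ s) ∣ a ∧ b = a + k * 2 ^ s then 1
        else if k ∣ a ∧ b < a + k then
          (if (a = 0 ∧ b - a ∉ X) ∨ (a = (ℓ - 1) * k ∧ b - a ∉ Y) then W else 1)
        else 0)
    (hsymm : ∀ a b, ew a b = ew b a)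
    (cutW : Finset (Fin n) → ℝ)
    (hcutW : ∀ S : Finset (Fin n),
      cutW S = ∑ u ∈ S, ∑ v ∈ Sᶜ, ew (u : ℕ) (v : ℕ))
    (Sz : Finset (Fin n))
    (hSzdef : Sz = Finset.univ.filter (fun i : Fin n => (i : ℕ) % k = z)) :
    cutW Sz = ℓ ∧
    ∀ S : Finset (Fin n), S.Nonempty → S ≠ Finset.univ → S ≠ Sz → S ≠ Szᶜ →
      α * ℓ + 1 ≤ cutW S := by
  have hzXY : z ∈ X ∩ Y := hXY ▸ mem_singleton_self z
  obtain ⟨hz, hzk⟩ := mem_Icc.1 (hX (mem_inter.1 hzXY).1)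
  have hW0 : 0 ≤ W := by
    have : 0 ≤ α * ℓ := mul_nonneg (by linarith) (Nat.cast_nonneg ℓ)
    linarith
  replace hSzdef : Sz = residueClass n k z := hSzdef
  subst hSzdef hn
  refine ⟨?_, fun S hne huniv hSz hSzc => ?_⟩
  · rw [hcutW, sum_congr rfl fun u hu => sum_compl_residueClass_eq_one hew hsymm hz (by omega)
      (mem_inter.1 hzXY).1 (mem_inter.1 hzXY).2 (mem_residueClass.1 hu), sum_const,
      card_residueClass (by omega), nsmul_one]
  · by_contra! hlt
    rw [hcutW, ← hW] at hlt
    rcases eq_of_sum_cut_lt rfl hXY hW0 hew hsymm hlt with rfl | rfl | rfl | rfl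
    · exact not_nonempty_empty hne
    · exact huniv rfl
    · exact hSz rfl
    · exact hSzc rfl

/-- The weighted lower-bound graph on `{0, …, n-1}` (`n = k·ℓ`)
encoding a set-disjointness instance `(X, Y)` with `X ∩ Y = {z}`: the cut around the
path `S_z = {i : i ≡ z (mod k)}` has total weight exactly `ℓ`, and every other
nontrivial cut has total weight at least `α·ℓ + 1`. Here `ew a b` is the weight of the
edge `{a, b}` (with `ew a b = 0` when `{a,b}` is not an edge), and
`cutW S = Σ_{u ∈ S} Σ_{v ∉ S} ew u v` is the weight of the cut `(S, V ∖ S)`. -/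
theorem statement14 (k ℓ n : ℕ) (hk : 2 ≤ k) (hℓ : 2 ≤ ℓ) (hn : n = k * ℓ)
    (α : ℝ) (hα : 1 ≤ α) (W : ℝ) (hW : W = α * ℓ + 1)
    (X Y : Finset ℕ) (hX : X ⊆ Finset.Icc 1 (k - 1)) (hY : Y ⊆ Finset.Icc 1 (k - 1))
    (z : ℕ) (hXY : X ∩ Y = {z})
    (ew : ℕ → ℕ → ℝ)
    (hew : ∀ a b : ℕ, a < b → b ≤ n - 1 →
      ew a b =
        if b = a + k then W
        else if ∃ s : ℕ, 1 ≤ s ∧ (k * 2 ^ s) ∣ a ∧ b = a + k * 2 ^ s then 1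
        else if k ∣ a ∧ b < a + k then
          (if (a = 0 ∧ b - a ∉ X) ∨ (a = (ℓ - 1) * k ∧ b - a ∉ Y) then W else 1)
        else 0)
    (hsymm : ∀ a b, ew a b = ew b a) (hdiag : ∀ a, ew a a = 0)
    (cutW : Finset (Fin n) → ℝ)
    (hcutW : ∀ S : Finset (Fin n),
      cutW S = ∑ u ∈ S, ∑ v ∈ Sᶜ, ew (u : ℕ) (v : ℕ))
    (Sz : Finset (Fin n))
    (hSzdef : Sz = Finset.univ.filter (fun i : Fin n => (i : ℕ) % k = z)) :
    cutW Sz = ℓ ∧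
    ∀ S : Finset (Fin n), S.Nonempty → S ≠ Finset.univ → S ≠ Sz → S ≠ Szᶜ →
      α * ℓ + 1 ≤ cutW S :=
  statement14_general k ℓ n hn α hα W hW X Y hX z hXY ew hew hsymm cutW hcutW Sz hSzdef
end

section
/- Let λ and n be integers with n ≥ λ + 1 ≥ 2, and let G be the simple graph on vertex set {0,…,n−1} in which distinct vertices i and j are adjacent if and only if |i − j| ≤ λ. Then the edge connectivity of G equals λ; that is, every nonempty proper vertex set S ⊆ {0,…,n−1} satisfies |∂S| ≥ λ, and the set S = {0} satisfies |∂S| = λ. -/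
open Classical

noncomputable section

/-- The simple graph on `{0, …, n-1}` in which distinct `i` and `j` are adjacent iff
`|i - j| ≤ λ`. -/
def bandGraph (n lam : ℕ) : SimpleGraph (Fin n) :=
  SimpleGraph.fromRel (fun i j =>
    ((i : ℕ) : ℤ) - ((j : ℕ) : ℤ) ≤ lam ∧ ((j : ℕ) : ℤ) - ((i : ℕ) : ℤ) ≤ lam)

/-!
Any edge `ij` of the band graph lies in a window of `λ + 1` consecutive vertices, which is a
clique; so `i` and `j` have at least `λ - 1` common neighbours `w`, and the paths `i w j`
together with the edge `ij` are edge-disjoint. If `S` contains `i` but not `j`, each of these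
`λ` paths contributes its own edge to `∂S`. A nonempty proper `S` separates the endpoints of
some edge because the graph is connected (it contains the path `0, 1, …, n-1`). Finally `∂{0}`
consists of the `λ` edges at `0`.
-/

open scoped Finset

namespace SimpleGraph

lemma Preconnected.exists_adj_mem_not_mem {V : Type*} {G : SimpleGraph V} {S : Set V}
    (hG : G.Preconnected) {x y : V} (hx : x ∈ S) (hy : y ∉ S) :
    ∃ u v, G.Adj u v ∧ u ∈ S ∧ v ∉ S := by
  obtain ⟨d, -, hd⟩ := (hG x y).some.exists_boundary_dart S hx hy
  exact ⟨d.fst, d.snd, d.adj, hd⟩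

variable {V : Type*} [Fintype V] {G : SimpleGraph V} {S : Finset V} {u v : V}

lemma mem_cutEdges {e : Sym2 V} :
    e ∈ cutEdges G S ↔ e ∈ G.edgeSet ∧ ∃ u v, e = s(u, v) ∧ u ∈ S ∧ v ∉ S := by
  simp [cutEdges]

lemma mk_mem_cutEdges (huv : G.Adj u v) (hu : u ∈ S) (hv : v ∉ S) : s(u, v) ∈ cutEdges G S :=
  mem_cutEdges.2 ⟨huv, u, v, rfl, hu, hv⟩

lemma cutEdges_singleton : cutEdges G {v} = G.incidenceFinset v := by
  ext e
  induction e using Sym2.ind with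
  | h x y =>
    simp only [mem_cutEdges, Finset.mem_singleton, mem_incidenceFinset, incidenceSet,
      Set.mem_ofPred_eq, mem_edgeSet, Sym2.mem_iff]
    constructor
    · rintro ⟨hxy, a, b, hab, rfl, hb⟩
      exact ⟨hxy, by rcases Sym2.eq_iff.1 hab with ⟨rfl, -⟩ | ⟨-, rfl⟩ <;> simp⟩
    · rintro ⟨hxy, rfl | rfl⟩
      · exact ⟨hxy, _, _, rfl, rfl, hxy.ne'⟩
      · exact ⟨hxy, _, _, Sym2.eq_swap, rfl, hxy.ne⟩

/-- Each common neighbour `w` of `u ∈ S` and `v ∉ S` yields the cut edge `wv` or `uw`, according to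
the side of `w`; these are distinct from each other and from `uv`. -/
lemma card_commonNeighbors_lt_card_cutEdges (huv : G.Adj u v) (hu : u ∈ S) (hv : v ∉ S) :
    #(G.commonNeighbors u v).toFinset < #(cutEdges G S) := by
  let f : V → Sym2 V := fun w => if w ∈ S then s(w, v) else s(u, w)
  have hf_cut : ∀ w ∈ G.commonNeighbors u v, f w ∈ cutEdges G S := by
    intro w hw
    rw [mem_commonNeighbors] at hw
    by_cases hwS : w ∈ S
    · simpa [f, hwS] using mk_mem_cutEdges hw.2.symm hwS hv
    · simpa [f, hwS] using mk_mem_cutEdges hw.1 hu hwS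
  have hf_mem : ∀ w, w ∈ f w := fun w => by by_cases hwS : w ∈ S <;> simp [f, hwS]
  have hf_sub : ∀ w x, x ∈ f w → x = w ∨ x = u ∨ x = v := fun w x hx => by
    by_cases hwS : w ∈ S <;> simp only [f, hwS, if_true, if_false, Sym2.mem_iff] at hx <;> tauto
  have hne : ∀ w ∈ G.commonNeighbors u v, w ≠ u ∧ w ≠ v := fun w hw => by
    rw [mem_commonNeighbors] at hw
    exact ⟨hw.1.ne', hw.2.ne'⟩
  have hinj : Set.InjOn f (G.commonNeighbors u v) := by
    intro w hw w' hw' hww'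
    have := hf_sub w' w (hww' ▸ hf_mem w)
    have := hne w hw
    tauto
  rw [← Finset.card_image_of_injOn (by simpa using hinj)]
  refine Finset.card_lt_card ((Finset.ssubset_iff_of_subset ?_).2 ⟨s(u, v), ?_, ?_⟩)
  · intro e he
    obtain ⟨w, hw, rfl⟩ := Finset.mem_image.1 he
    exact hf_cut w (by simpa using hw)
  · exact mk_mem_cutEdges huv hu hv
  · intro he
    obtain ⟨w, hw, hfw⟩ := Finset.mem_image.1 he
    have := hf_mem w
    rw [hfw, Sym2.mem_iff] at this
    have := hne w (by simpa using hw)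
    tauto

lemma IsNClique.sub_one_le_card_cutEdges {m : ℕ} {K : Finset V} (hK : G.IsNClique m K)
    (huK : u ∈ K) (hvK : v ∈ K) (huS : u ∈ S) (hvS : v ∉ S) : m - 1 ≤ #(cutEdges G S) := by
  have huv : u ≠ v := by rintro rfl; exact hvS huS
  have hadj : G.Adj u v := hK.isClique huK hvK huv
  have hsub : (K.erase u).erase v ⊆ (G.commonNeighbors u v).toFinset := by
    intro w hw
    simp only [Finset.mem_erase] at hw
    simpa [mem_commonNeighbors] using
      ⟨hK.isClique huK hw.2.2 (Ne.symm hw.2.1), hK.isClique hvK hw.2.2 (Ne.symm hw.1)⟩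
  have hcard : #((K.erase u).erase v) = m - 2 := by
    rw [Finset.card_erase_of_mem (Finset.mem_erase.2 ⟨huv.symm, hvK⟩),
      Finset.card_erase_of_mem huK, hK.card_eq, Nat.sub_sub]
  have := Finset.card_le_card hsub
  have := card_commonNeighbors_lt_card_cutEdges (S := S) hadj huS hvS
  omega

end SimpleGraph

open SimpleGraph

section Band

variable {n lam : ℕ}

lemma bandGraph_adj {i j : Fin n} :
    (bandGraph n lam).Adj i j ↔ i ≠ j ∧ (i : ℕ) ≤ j + lam ∧ (j : ℕ) ≤ i + lam := by
  simp only [bandGraph, fromRel_adj]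
  omega

lemma pathGraph_le_bandGraph (hlam : 1 ≤ lam) : pathGraph n ≤ bandGraph n lam := by
  intro i j hij
  rw [pathGraph_adj] at hij
  rw [bandGraph_adj, Ne, Fin.ext_iff]
  omega

lemma bandGraph_isNClique_Icc (a : Fin n) (ha : a + lam < n) :
    (bandGraph n lam).IsNClique (lam + 1) (Finset.Icc a ⟨a + lam, ha⟩) := by
  refine ⟨fun i hi j hj hij => ?_, by simp only [Fin.card_Icc]; omega⟩
  simp only [Finset.coe_Icc, Set.mem_Icc, Fin.le_iff_val_le_val] at hi hj
  rw [bandGraph_adj]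
  omega

/-- A window of `λ + 1` consecutive vertices around the edge `ij` fits inside `{0, …, n-1}`. -/
lemma bandGraph_exists_isNClique_of_adj (hn : lam + 1 ≤ n) {i j : Fin n}
    (hij : (bandGraph n lam).Adj i j) :
    ∃ K, (bandGraph n lam).IsNClique (lam + 1) K ∧ i ∈ K ∧ j ∈ K := by
  let a : Fin n := ⟨min (min i j) (n - 1 - lam), by omega⟩
  rw [bandGraph_adj] at hij
  refine ⟨_, bandGraph_isNClique_Icc a (by simp only [a]; omega), ?_, ?_⟩ <;>
    simp only [Finset.mem_Icc, Fin.le_iff_val_le_val, a] <;> omega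

lemma bandGraph_degree_zero (hn : lam + 1 ≤ n) :
    (bandGraph n lam).degree ⟨0, by omega⟩ = lam := by
  have : (bandGraph n lam).neighborFinset ⟨0, by omega⟩ = Finset.Ioc ⟨0, by omega⟩ ⟨lam, hn⟩ := by
    ext i
    simp only [mem_neighborFinset, bandGraph_adj, Finset.mem_Ioc, Fin.le_iff_val_le_val,
      Fin.lt_def, Ne, Fin.ext_iff]
    omega
  rw [← card_neighborFinset_eq_degree, this, Fin.card_Ioc]
  rfl

end Band

/-- For `n ≥ λ + 1 ≥ 2`, the band graph has edge connectivity
exactly `λ`: every nontrivial cut has at least `λ` edges, and the cut around `{0}` has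
exactly `λ` edges. -/
theorem statement15 (lam n : ℕ) (hlam : 1 ≤ lam) (hn : lam + 1 ≤ n) :
    (∀ S : Finset (Fin n), S.Nonempty → S ≠ Finset.univ →
        lam ≤ (cutEdges (bandGraph n lam) S).card) ∧
      (cutEdges (bandGraph n lam) {(⟨0, by omega⟩ : Fin n)}).card = lam := by
  refine ⟨fun S ⟨x, hx⟩ hS => ?_, ?_⟩
  · obtain ⟨y, hy⟩ : ∃ y, y ∉ S := by simpa [Finset.eq_univ_iff_forall] using hS
    have hconn := (pathGraph_preconnected n).mono (pathGraph_le_bandGraph hlam)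
    obtain ⟨u, v, huv, hu, hv⟩ := hconn.exists_adj_mem_not_mem hx hy
    obtain ⟨K, hK, huK, hvK⟩ := bandGraph_exists_isNClique_of_adj hn huv
    simpa using hK.sub_one_le_card_cutEdges huK hvK hu hv
  · rw [cutEdges_singleton, card_incidenceFinset_eq_degree, bandGraph_degree_zero hn]
end
end
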